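/- arXiv:1712.03593 — 2 statements merged into one kernel-verified Lean document; each statement's English description precedes it below -/
import Mathlib

section
/- Let U ⊆ ℝ^m be an open set and φ = (φ^1, …, φ^n) : U → ℝ^n a smooth map. Then φ is a generalized harmonic morphism if and only if the following three conditions hold: (a) φ is horizontally weakly conformal; (b) every component φ^α is biharmonic on U; (c) for all indices 1 ≤ α ≠ β ≤ n, the functions φ^α·φ^β and (φ^α)² − (φ^β)² are biharmonic on U (equivalently, the complex-valued map (φ^α + i φ^β)² : U → ℂ is biharmonic). -/
open scoped BigOperators RealInnerProductSpace

noncomputable section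

/-- `m`-dimensional Euclidean space. -/
abbrev E (m : ℕ) := EuclideanSpace ℝ (Fin m)

/-- The Euclidean Laplacian of a real-valued function: the sum of the second
partial derivatives in the coordinate directions. -/
noncomputable def lap {m : ℕ} (f : E m → ℝ) (x : E m) : ℝ :=
  ∑ i : Fin m,
    fderiv ℝ (fun y => fderiv ℝ f y (EuclideanSpace.single i 1)) x (EuclideanSpace.single i 1)

/-- The Euclidean Laplacian of a complex-valued function (applied componentwise). -/
noncomputable def lapC {m : ℕ} (f : E m → ℂ) (x : E m) : ℂ :=
  ∑ i : Fin m,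
    fderiv ℝ (fun y => fderiv ℝ f y (EuclideanSpace.single i 1)) x (EuclideanSpace.single i 1)

/-- A (smooth) harmonic function on a set: `Δ f = 0` there. -/
def HarmonicOn {m : ℕ} (f : E m → ℝ) (s : Set (E m)) : Prop :=
  ContDiffOn ℝ (⊤ : ℕ∞) f s ∧ ∀ x ∈ s, lap f x = 0

/-- A (smooth) biharmonic function on a set: `Δ (Δ f) = 0` there. -/
def BiharmonicOn {m : ℕ} (f : E m → ℝ) (s : Set (E m)) : Prop :=
  ContDiffOn ℝ (⊤ : ℕ∞) f s ∧ ∀ x ∈ s, lap (lap f) x = 0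

/-- A generalized harmonic morphism on `U`: it pulls back every harmonic function on an
open set `V` of the target to a biharmonic function on `U ∩ φ ⁻¹' V`. -/
def IsGHM {m n : ℕ} (φ : E m → E n) (U : Set (E m)) : Prop :=
  ∀ V : Set (E n), IsOpen V → ∀ f : E n → ℝ, HarmonicOn f V →
    BiharmonicOn (f ∘ φ) (U ∩ φ ⁻¹' V)

/-- A harmonic morphism on `U`: it pulls back harmonic functions to harmonic functions. -/
def IsHM {m n : ℕ} (φ : E m → E n) (U : Set (E m)) : Prop :=
  ∀ V : Set (E n), IsOpen V → ∀ f : E n → ℝ, HarmonicOn f V →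
    HarmonicOn (f ∘ φ) (U ∩ φ ⁻¹' V)

/-- A biharmonic morphism on `U`: it pulls back biharmonic functions to biharmonic
functions. -/
def IsBHM {m n : ℕ} (φ : E m → E n) (U : Set (E m)) : Prop :=
  ∀ V : Set (E n), IsOpen V → ∀ f : E n → ℝ, BiharmonicOn f V →
    BiharmonicOn (f ∘ φ) (U ∩ φ ⁻¹' V)

/-- Horizontally weakly conformal on `U`: there is `λ : U → [0,∞)` with
`⟪∇φ^α, ∇φ^β⟫ = λ² δ_{αβ}` pointwise on `U`. -/
def IsHWC {m n : ℕ} (φ : E m → E n) (U : Set (E m)) : Prop :=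
  ∃ lam : E m → ℝ, (∀ x, 0 ≤ lam x) ∧
    ∀ x ∈ U, ∀ α β : Fin n,
      ⟪gradient (fun y => φ y α) x, gradient (fun y => φ y β) x⟫ =
        (lam x) ^ 2 * (if α = β then 1 else 0)


namespace GHM

variable {k m n : ℕ}

/-- partial derivative in direction `i`. -/
noncomputable def pd (i : Fin k) (f : E k → ℝ) : E k → ℝ :=
  fun x => fderiv ℝ f x (EuclideanSpace.single i 1)

lemma lap_eq (f : E k → ℝ) (x : E k) : lap f x = ∑ i, pd i (pd i f) x := rfl

lemma pd_congr {s : Set (E k)} (hs : IsOpen s) {f g : E k → ℝ} (h : ∀ y ∈ s, f y = g y)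
    {x : E k} (hx : x ∈ s) (i : Fin k) : pd i f x = pd i g x := by
  unfold pd
  rw [(Filter.eventuallyEq_of_mem (hs.mem_nhds hx) h).fderiv_eq]

lemma lap_congr {s : Set (E k)} (hs : IsOpen s) {f g : E k → ℝ} (h : ∀ y ∈ s, f y = g y)
    {x : E k} (hx : x ∈ s) : lap f x = lap g x := by
  rw [lap_eq, lap_eq]
  refine Finset.sum_congr rfl fun i _ => ?_
  exact pd_congr hs (fun y hy => pd_congr hs h hy i) hx i

lemma contDiffOn_pd {s : Set (E k)} (hs : IsOpen s) {f : E k → ℝ}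
    (hf : ContDiffOn ℝ (⊤ : ℕ∞) f s) (i : Fin k) : ContDiffOn ℝ (⊤ : ℕ∞) (pd i f) s := by
  have h1 : ContDiffOn ℝ (⊤ : ℕ∞) (fderiv ℝ f) s := hf.fderiv_of_isOpen hs (by simp)
  exact (ContinuousLinearMap.apply ℝ ℝ (EuclideanSpace.single i 1)).contDiff.comp_contDiffOn h1

lemma diffAt {s : Set (E k)} {F : Type*} [NormedAddCommGroup F] [NormedSpace ℝ F]
    (hs : IsOpen s) {f : E k → F} (hf : ContDiffOn ℝ (⊤ : ℕ∞) f s) {x : E k} (hx : x ∈ s) :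
    DifferentiableAt ℝ f x :=
  ((hf.differentiableOn (by simp)).differentiableAt (hs.mem_nhds hx))

lemma pd_add {u v : E k → ℝ} {x : E k} (hu : DifferentiableAt ℝ u x)
    (hv : DifferentiableAt ℝ v x) (i : Fin k) :
    pd i (fun y => u y + v y) x = pd i u x + pd i v x := by
  unfold pd; rw [fderiv_fun_add hu hv]; rfl

lemma pd_sub {u v : E k → ℝ} {x : E k} (hu : DifferentiableAt ℝ u x)
    (hv : DifferentiableAt ℝ v x) (i : Fin k) :
    pd i (fun y => u y - v y) x = pd i u x - pd i v x := by
  unfold pd; rw [fderiv_fun_sub hu hv]; rfl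

lemma pd_const (c : ℝ) (x : E k) (i : Fin k) : pd i (fun _ => c) x = 0 := by
  unfold pd; rw [fderiv_fun_const]; rfl

lemma pd_const_mul {u : E k → ℝ} {x : E k} (hu : DifferentiableAt ℝ u x) (c : ℝ) (i : Fin k) :
    pd i (fun y => c * u y) x = c * pd i u x := by
  unfold pd; rw [fderiv_const_mul hu]; rfl

lemma pd_mul {u v : E k → ℝ} {x : E k} (hu : DifferentiableAt ℝ u x)
    (hv : DifferentiableAt ℝ v x) (i : Fin k) :
    pd i (fun y => u y * v y) x = u x * pd i v x + v x * pd i u x := by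
  unfold pd; rw [fderiv_fun_mul hu hv]; rfl

lemma pd_sum {ι : Type*} (A : Finset ι) {u : ι → E k → ℝ} {x : E k}
    (hu : ∀ a ∈ A, DifferentiableAt ℝ (u a) x) (i : Fin k) :
    pd i (fun y => ∑ a ∈ A, u a y) x = ∑ a ∈ A, pd i (u a) x := by
  unfold pd; rw [fderiv_fun_sum hu]; simp

lemma pd_sub_const {u : E k → ℝ} (c : ℝ) (x : E k) (i : Fin k) :
    pd i (fun y => u y - c) x = pd i u x := by
  unfold pd; rw [fderiv_sub_const]

/-- symmetry of second partials -/
lemma pd_comm {s : Set (E k)} (hs : IsOpen s) {f : E k → ℝ}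
    (hf : ContDiffOn ℝ (⊤ : ℕ∞) f s) {x : E k} (hx : x ∈ s) (i j : Fin k) :
    pd i (pd j f) x = pd j (pd i f) x := by
  have hdf : DifferentiableAt ℝ (fderiv ℝ f) x :=
    ((hf.fderiv_of_isOpen hs (by simp) : ContDiffOn ℝ (⊤ : ℕ∞) (fderiv ℝ f) s).differentiableOn (by simp)).differentiableAt (hs.mem_nhds hx)
  have hsymm : IsSymmSndFDerivAt ℝ f x :=
    (hf.contDiffAt (hs.mem_nhds hx)).isSymmSndFDerivAt (by norm_num; exact (WithTop.coe_le_coe.mpr (le_top : (2:ℕ∞) ≤ ⊤) : ((2:ℕ∞) : WithTop ℕ∞) ≤ ((⊤:ℕ∞) : WithTop ℕ∞)))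
  have key : ∀ v : E k, fderiv ℝ (fun y => fderiv ℝ f y v) x
      = (fderiv ℝ (fderiv ℝ f) x).flip v := by
    intro v
    rw [fderiv_clm_apply hdf (differentiableAt_const v)]
    simp
  show fderiv ℝ (fun y => fderiv ℝ f y (EuclideanSpace.single j 1)) x (EuclideanSpace.single i 1)
      = fderiv ℝ (fun y => fderiv ℝ f y (EuclideanSpace.single i 1)) x (EuclideanSpace.single j 1)
  rw [key, key]
  exact hsymm _ _

lemma clm_apply_eq_sum (L : E n →L[ℝ] ℝ) (v : E n) :
    L v = ∑ α, v α * L (EuclideanSpace.single α 1) := by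
  have hv : v = ∑ α, v α • EuclideanSpace.single α (1:ℝ) := by
    ext j
    rw [WithLp.ofLp_sum, Finset.sum_apply]
    simp [EuclideanSpace.single_apply]
  conv_lhs => rw [hv]
  rw [map_sum]
  simp [smul_eq_mul]

lemma fderiv_component (φ : E m → E n) (α : Fin n) {x : E m} (hφ : DifferentiableAt ℝ φ x)
    (w : E m) : fderiv ℝ (fun y => φ y α) x w = (fderiv ℝ φ x w) α := by
  have h2 : HasFDerivAt (fun y => φ y α) ((EuclideanSpace.proj α).comp (fderiv ℝ φ x)) x := by
    exact ((EuclideanSpace.proj (𝕜 := ℝ) α).hasFDerivAt.comp x hφ.hasFDerivAt : _)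
  rw [h2.fderiv]; rfl

/-- Chain rule for partial derivatives. -/
lemma pd_comp {φ : E m → E n} {f : E n → ℝ} {x : E m} (hφ : DifferentiableAt ℝ φ x)
    (hf : DifferentiableAt ℝ f (φ x)) (i : Fin m) :
    pd i (fun y => f (φ y)) x = ∑ α, pd α f (φ x) * pd i (fun y => φ y α) x := by
  have hc : fderiv ℝ (f ∘ φ) x = (fderiv ℝ f (φ x)).comp (fderiv ℝ φ x) :=
    fderiv_comp x hf hφ
  show fderiv ℝ (f ∘ φ) x (EuclideanSpace.single i 1) = _
  rw [hc]
  simp only [ContinuousLinearMap.coe_comp', Function.comp_apply]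
  rw [clm_apply_eq_sum]
  refine Finset.sum_congr rfl fun α _ => ?_
  show _ = pd α f (φ x) * fderiv ℝ (fun y => φ y α) x (EuclideanSpace.single i 1)
  rw [fderiv_component φ α hφ, mul_comm]
  rfl

lemma contDiffOn_lap {s : Set (E k)} (hs : IsOpen s) {f : E k → ℝ}
    (hf : ContDiffOn ℝ (⊤ : ℕ∞) f s) : ContDiffOn ℝ (⊤ : ℕ∞) (lap f) s := by
  have : ContDiffOn ℝ (⊤ : ℕ∞) (fun x => ∑ i, pd i (pd i f) x) s :=
    ContDiffOn.sum fun i _ => contDiffOn_pd hs (contDiffOn_pd hs hf i) i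
  exact this

lemma lap_add {s : Set (E k)} (hs : IsOpen s) {u v : E k → ℝ}
    (hu : ContDiffOn ℝ (⊤ : ℕ∞) u s) (hv : ContDiffOn ℝ (⊤ : ℕ∞) v s) {x : E k} (hx : x ∈ s) :
    lap (fun y => u y + v y) x = lap u x + lap v x := by
  rw [lap_eq, lap_eq, lap_eq, ← Finset.sum_add_distrib]
  refine Finset.sum_congr rfl fun i _ => ?_
  have h1 : ∀ y ∈ s, pd i (fun y => u y + v y) y = pd i u y + pd i v y :=
    fun y hy => pd_add (diffAt hs hu hy) (diffAt hs hv hy) i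
  rw [pd_congr hs h1 hx i]
  exact pd_add (diffAt hs (contDiffOn_pd hs hu i) hx) (diffAt hs (contDiffOn_pd hs hv i) hx) i

lemma lap_sub {s : Set (E k)} (hs : IsOpen s) {u v : E k → ℝ}
    (hu : ContDiffOn ℝ (⊤ : ℕ∞) u s) (hv : ContDiffOn ℝ (⊤ : ℕ∞) v s) {x : E k} (hx : x ∈ s) :
    lap (fun y => u y - v y) x = lap u x - lap v x := by
  rw [lap_eq, lap_eq, lap_eq, ← Finset.sum_sub_distrib]
  refine Finset.sum_congr rfl fun i _ => ?_
  have h1 : ∀ y ∈ s, pd i (fun y => u y - v y) y = pd i u y - pd i v y :=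
    fun y hy => pd_sub (diffAt hs hu hy) (diffAt hs hv hy) i
  rw [pd_congr hs h1 hx i]
  exact pd_sub (diffAt hs (contDiffOn_pd hs hu i) hx) (diffAt hs (contDiffOn_pd hs hv i) hx) i

lemma lap_const_mul {s : Set (E k)} (hs : IsOpen s) {u : E k → ℝ}
    (hu : ContDiffOn ℝ (⊤ : ℕ∞) u s) (c : ℝ) {x : E k} (hx : x ∈ s) :
    lap (fun y => c * u y) x = c * lap u x := by
  rw [lap_eq, lap_eq, Finset.mul_sum]
  refine Finset.sum_congr rfl fun i _ => ?_
  have h1 : ∀ y ∈ s, pd i (fun y => c * u y) y = c * pd i u y :=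
    fun y hy => pd_const_mul (diffAt hs hu hy) c i
  rw [pd_congr hs h1 hx i]
  exact pd_const_mul (diffAt hs (contDiffOn_pd hs hu i) hx) c i

lemma lap_const (c : ℝ) (x : E k) : lap (fun _ => c) x = 0 := by
  rw [lap_eq]
  refine Finset.sum_eq_zero fun i _ => ?_
  have h1 : ∀ y ∈ (Set.univ : Set (E k)), pd i (fun _ => c) y = (fun _ => (0:ℝ)) y :=
    fun y _ => pd_const c y i
  rw [pd_congr isOpen_univ h1 (Set.mem_univ x) i]
  exact pd_const 0 x i

lemma lap_mul {s : Set (E k)} (hs : IsOpen s) {u v : E k → ℝ}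
    (hu : ContDiffOn ℝ (⊤ : ℕ∞) u s) (hv : ContDiffOn ℝ (⊤ : ℕ∞) v s) {x : E k} (hx : x ∈ s) :
    lap (fun y => u y * v y) x
      = u x * lap v x + v x * lap u x + 2 * ∑ i, pd i u x * pd i v x := by
  rw [lap_eq]
  have key : ∀ i : Fin k, pd i (pd i (fun y => u y * v y)) x
      = u x * pd i (pd i v) x + v x * pd i (pd i u) x + 2 * (pd i u x * pd i v x) := by
    intro i
    have h1 : ∀ y ∈ s, pd i (fun y => u y * v y) y
        = (fun y => u y * pd i v y + v y * pd i u y) y :=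
      fun y hy => pd_mul (diffAt hs hu hy) (diffAt hs hv hy) i
    rw [pd_congr hs h1 hx i]
    have hu' := diffAt hs hu hx
    have hv' := diffAt hs hv hx
    have hpu := diffAt hs (contDiffOn_pd hs hu i) hx
    have hpv := diffAt hs (contDiffOn_pd hs hv i) hx
    rw [pd_add (u := fun y => u y * pd i v y) (v := fun y => v y * pd i u y) (hu'.mul hpv) (hv'.mul hpu) i, pd_mul hu' hpv i, pd_mul hv' hpu i]
    ring
  rw [Finset.sum_congr rfl fun i _ => key i]
  rw [lap_eq, lap_eq]
  rw [Finset.sum_add_distrib, Finset.sum_add_distrib, ← Finset.mul_sum, ← Finset.mul_sum,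
    ← Finset.mul_sum]

lemma lap_sum {s : Set (E k)} (hs : IsOpen s) {ι : Type*} (A : Finset ι) {u : ι → E k → ℝ}
    (hu : ∀ a ∈ A, ContDiffOn ℝ (⊤ : ℕ∞) (u a) s) {x : E k} (hx : x ∈ s) :
    lap (fun y => ∑ a ∈ A, u a y) x = ∑ a ∈ A, lap (u a) x := by
  classical
  induction A using Finset.induction with
  | empty => simpa using lap_const 0 x
  | insert b A' ha ih =>
    have hb := hu b (Finset.mem_insert_self b A')
    have hA' : ∀ a ∈ A', ContDiffOn ℝ (⊤ : ℕ∞) (u a) s := fun a haa => hu a (Finset.mem_insert_of_mem haa)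
    have hsum : ContDiffOn ℝ (⊤ : ℕ∞) (fun y => ∑ a ∈ A', u a y) s := ContDiffOn.sum fun a haa => hA' a haa
    have h2 : lap (fun y => ∑ a ∈ insert b A', u a y) x
        = lap (fun y => u b y + ∑ a ∈ A', u a y) x := by
      apply lap_congr hs (fun y _ => ?_) hx
      rw [Finset.sum_insert ha]
    rw [h2, lap_add hs hb hsum hx, ih hA', Finset.sum_insert ha]

/-- component of φ is smooth -/
lemma contDiffOn_comp' {s : Set (E m)} {φ : E m → E n} (hφ : ContDiffOn ℝ (⊤ : ℕ∞) φ s) (α : Fin n) :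
    ContDiffOn ℝ (⊤ : ℕ∞) (fun y => φ y α) s :=
  (EuclideanSpace.proj (𝕜 := ℝ) α).contDiff.comp_contDiffOn hφ

lemma inner_gradient_eq (u v : E k → ℝ) (x : E k) :
    ⟪gradient u x, gradient v x⟫ = ∑ i, pd i u x * pd i v x := by
  have hcoord : ∀ (w : E k → ℝ) (i : Fin k), gradient w x i = pd i w x := by
    intro w i
    have h1 : ⟪gradient w x, EuclideanSpace.single i (1:ℝ)⟫ = pd i w x := by
      unfold gradient pd
      exact InnerProductSpace.toDual_symm_apply
    rw [← h1, real_inner_comm, EuclideanSpace.inner_single_left]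
    simp
  have h2 : ⟪gradient u x, gradient v x⟫ = ∑ i, gradient u x i * gradient v x i := by
    rw [PiLp.inner_apply]
    refine Finset.sum_congr rfl fun i _ => ?_
    simp [mul_comm]
  rw [h2]
  exact Finset.sum_congr rfl fun i _ => by rw [hcoord u i, hcoord v i]

/-- The composition formula for the Laplacian. -/
lemma lap_comp {s : Set (E m)} {V : Set (E n)} (hs : IsOpen s) (hV : IsOpen V)
    {φ : E m → E n} (hφ : ContDiffOn ℝ (⊤ : ℕ∞) φ s) (hmaps : Set.MapsTo φ s V)
    {f : E n → ℝ} (hf : ContDiffOn ℝ (⊤ : ℕ∞) f V) {x : E m} (hx : x ∈ s) :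
    lap (fun y => f (φ y)) x
      = (∑ α, pd α f (φ x) * lap (fun y => φ y α) x)
        + ∑ α, ∑ β, pd β (pd α f) (φ x) *
            ∑ i, pd i (fun y => φ y α) x * pd i (fun y => φ y β) x := by
  rw [lap_eq]
  have key : ∀ i : Fin m, pd i (pd i (fun y => f (φ y))) x
      = (∑ α, pd α f (φ x) * pd i (pd i (fun y => φ y α)) x)
        + ∑ α, ∑ β, pd β (pd α f) (φ x) *
            (pd i (fun y => φ y α) x * pd i (fun y => φ y β) x) := by
    intro i
    have h1 : ∀ y ∈ s, pd i (fun y => f (φ y)) y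
        = (fun y => ∑ α, (fun z => pd α f (φ z)) y * pd i (fun z => φ z α) y) y :=
      fun y hy => pd_comp (diffAt hs hφ hy) (diffAt hV hf (hmaps hy)) i
    rw [pd_congr hs h1 hx i]
    have hterm : ∀ α : Fin n,
        DifferentiableAt ℝ (fun z => pd α f (φ z) * pd i (fun w => φ w α) z) x := by
      intro α
      exact ((diffAt hV (contDiffOn_pd hV hf α) (hmaps hx)).comp x (diffAt hs hφ hx)).mul
        (diffAt hs (contDiffOn_pd hs (contDiffOn_comp' hφ α) i) hx)
    rw [pd_sum Finset.univ (fun α _ => hterm α) i]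
    have hsummand : ∀ α : Fin n,
        pd i (fun z => pd α f (φ z) * pd i (fun w => φ w α) z) x
        = pd α f (φ x) * pd i (pd i (fun w => φ w α)) x
          + (∑ β, pd β (pd α f) (φ x) * pd i (fun w => φ w β) x) * pd i (fun w => φ w α) x := by
      intro α
      have hd1 : DifferentiableAt ℝ (fun z => pd α f (φ z)) x :=
        ((diffAt hV (contDiffOn_pd hV hf α) (hmaps hx)).comp x (diffAt hs hφ hx) : _)
      rw [pd_mul hd1 (diffAt hs (contDiffOn_pd hs (contDiffOn_comp' hφ α) i) hx) i]
      rw [pd_comp (diffAt hs hφ hx) (diffAt hV (contDiffOn_pd hV hf α) (hmaps hx)) i]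
      ring
    rw [Finset.sum_congr rfl fun α _ => hsummand α, Finset.sum_add_distrib]
    congr 1
    refine Finset.sum_congr rfl fun α _ => ?_
    rw [Finset.sum_mul]
    exact Finset.sum_congr rfl fun β _ => by ring
  rw [Finset.sum_congr rfl fun i _ => key i, Finset.sum_add_distrib]
  congr 1
  · rw [Finset.sum_comm]
    refine Finset.sum_congr rfl fun α _ => ?_
    rw [lap_eq, Finset.mul_sum]
  · rw [Finset.sum_comm]
    refine Finset.sum_congr rfl fun α _ => ?_
    rw [Finset.sum_comm]
    refine Finset.sum_congr rfl fun β _ => ?_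
    rw [Finset.mul_sum]

lemma lap_lap_add {s : Set (E k)} (hs : IsOpen s) {u v : E k → ℝ}
    (hu : ContDiffOn ℝ (⊤ : ℕ∞) u s) (hv : ContDiffOn ℝ (⊤ : ℕ∞) v s) {x : E k} (hx : x ∈ s) :
    lap (lap (fun y => u y + v y)) x = lap (lap u) x + lap (lap v) x := by
  have h1 : ∀ y ∈ s, lap (fun z => u z + v z) y = (fun z => lap u z + lap v z) y :=
    fun y hy => lap_add hs hu hv hy
  rw [lap_congr hs h1 hx]
  exact lap_add hs (contDiffOn_lap hs hu) (contDiffOn_lap hs hv) hx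

lemma lap_lap_sub {s : Set (E k)} (hs : IsOpen s) {u v : E k → ℝ}
    (hu : ContDiffOn ℝ (⊤ : ℕ∞) u s) (hv : ContDiffOn ℝ (⊤ : ℕ∞) v s) {x : E k} (hx : x ∈ s) :
    lap (lap (fun y => u y - v y)) x = lap (lap u) x - lap (lap v) x := by
  have h1 : ∀ y ∈ s, lap (fun z => u z - v z) y = (fun z => lap u z - lap v z) y :=
    fun y hy => lap_sub hs hu hv hy
  rw [lap_congr hs h1 hx]
  exact lap_sub hs (contDiffOn_lap hs hu) (contDiffOn_lap hs hv) hx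

lemma lap_lap_const_mul {s : Set (E k)} (hs : IsOpen s) {u : E k → ℝ}
    (hu : ContDiffOn ℝ (⊤ : ℕ∞) u s) (c : ℝ) {x : E k} (hx : x ∈ s) :
    lap (lap (fun y => c * u y)) x = c * lap (lap u) x := by
  have h1 : ∀ y ∈ s, lap (fun z => c * u z) y = (fun z => c * lap u z) y :=
    fun y hy => lap_const_mul hs hu c hy
  rw [lap_congr hs h1 hx]
  exact lap_const_mul hs (contDiffOn_lap hs hu) c hx

lemma sum_sum_factor (a b c d : Fin k → ℝ) :
    ∑ i, ∑ j, a j * b i * (c j * d i) = (∑ j, a j * c j) * (∑ i, b i * d i) := by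
  rw [Finset.sum_mul_sum]
  rw [Finset.sum_comm]
  exact Finset.sum_congr rfl fun i _ => Finset.sum_congr rfl fun j _ => by ring

lemma quad_sum_algebra (pq pr pt pw : Fin k → ℝ) :
    ∑ i, 2 * ∑ j, (pq j * pr i + pq i * pr j) * (pt j * pw i + pt i * pw j)
      = 4 * ((∑ j, pq j * pt j) * (∑ i, pr i * pw i)
           + (∑ j, pq j * pw j) * (∑ i, pr i * pt i)) := by
  have h4 : ∀ i j : Fin k, (pq j * pr i + pq i * pr j) * (pt j * pw i + pt i * pw j)
      = pq j * pr i * (pt j * pw i) + pq j * pr i * (pw j * pt i)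
        + (pr j * pq i * (pt j * pw i) + pr j * pq i * (pw j * pt i)) := fun i j => by ring
  have hsplit : ∀ i : Fin k, ∑ j, (pq j * pr i + pq i * pr j) * (pt j * pw i + pt i * pw j)
      = (∑ j, pq j * pr i * (pt j * pw i)) + (∑ j, pq j * pr i * (pw j * pt i))
        + ((∑ j, pr j * pq i * (pt j * pw i)) + (∑ j, pr j * pq i * (pw j * pt i))) := by
    intro i
    rw [Finset.sum_congr rfl fun j _ => h4 i j, Finset.sum_add_distrib, Finset.sum_add_distrib,
      Finset.sum_add_distrib]
  calc ∑ i, 2 * ∑ j, (pq j * pr i + pq i * pr j) * (pt j * pw i + pt i * pw j)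
      = 2 * ∑ i, ∑ j, (pq j * pr i + pq i * pr j) * (pt j * pw i + pt i * pw j) := by
        rw [Finset.mul_sum]
    _ = 2 * (∑ i, ((∑ j, pq j * pr i * (pt j * pw i)) + (∑ j, pq j * pr i * (pw j * pt i))
          + ((∑ j, pr j * pq i * (pt j * pw i)) + (∑ j, pr j * pq i * (pw j * pt i))))) := by
        rw [Finset.sum_congr rfl fun i _ => hsplit i]
    _ = 2 * ((∑ i, ∑ j, pq j * pr i * (pt j * pw i)) + (∑ i, ∑ j, pq j * pr i * (pw j * pt i))
          + ((∑ i, ∑ j, pr j * pq i * (pt j * pw i))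
            + (∑ i, ∑ j, pr j * pq i * (pw j * pt i)))) := by
        rw [Finset.sum_add_distrib, Finset.sum_add_distrib, Finset.sum_add_distrib]
    _ = _ := by
        rw [sum_sum_factor pq pr pt pw, sum_sum_factor pq pr pw pt,
          sum_sum_factor pr pq pt pw, sum_sum_factor pr pq pw pt]
        ring

/-- Second partial of a product at a common zero. -/
lemma pd_pd_mul_zero {s : Set (E k)} (hs : IsOpen s) {u v : E k → ℝ}
    (hu : ContDiffOn ℝ (⊤ : ℕ∞) u s) (hv : ContDiffOn ℝ (⊤ : ℕ∞) v s) {x : E k} (hx : x ∈ s)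
    (hu0 : u x = 0) (hv0 : v x = 0) (i j : Fin k) :
    pd j (pd i (fun y => u y * v y)) x
      = pd j u x * pd i v x + pd i u x * pd j v x := by
  have h1 : ∀ y ∈ s, pd i (fun z => u z * v z) y
      = (fun z => u z * pd i v z + v z * pd i u z) y :=
    fun y hy => pd_mul (diffAt hs hu hy) (diffAt hs hv hy) i
  rw [pd_congr hs h1 hx j]
  have hu' := diffAt hs hu hx
  have hv' := diffAt hs hv hx
  have hpu := diffAt hs (contDiffOn_pd hs hu i) hx
  have hpv := diffAt hs (contDiffOn_pd hs hv i) hx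
  rw [pd_add (u := fun y => u y * pd i v y) (v := fun y => v y * pd i u y) (hu'.mul hpv) (hv'.mul hpu) j, pd_mul hu' hpv j, pd_mul hv' hpu j, hu0, hv0]
  ring

/-- Δ² of a product of four functions all vanishing at `x`. -/
lemma lap_lap_quad {s : Set (E k)} (hs : IsOpen s) {q r t w : E k → ℝ}
    (hq : ContDiffOn ℝ (⊤ : ℕ∞) q s) (hr : ContDiffOn ℝ (⊤ : ℕ∞) r s)
    (ht : ContDiffOn ℝ (⊤ : ℕ∞) t s) (hw : ContDiffOn ℝ (⊤ : ℕ∞) w s) {x : E k} (hx : x ∈ s)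
    (hq0 : q x = 0) (hr0 : r x = 0) (ht0 : t x = 0) (hw0 : w x = 0) :
    lap (lap (fun y => q y * r y * (t y * w y))) x
      = 8 * ((∑ i, pd i q x * pd i r x) * (∑ i, pd i t x * pd i w x)
           + (∑ i, pd i q x * pd i t x) * (∑ i, pd i r x * pd i w x)
           + (∑ i, pd i q x * pd i w x) * (∑ i, pd i r x * pd i t x)) := by
  have hQR : ContDiffOn ℝ (⊤ : ℕ∞) (fun y => q y * r y) s := hq.mul hr
  have hTW : ContDiffOn ℝ (⊤ : ℕ∞) (fun y => t y * w y) s := ht.mul hw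
  have hKi : ∀ i : Fin k, ContDiffOn ℝ (⊤ : ℕ∞)
      (fun y => pd i (fun z => q z * r z) y * pd i (fun z => t z * w z) y) s :=
    fun i => (contDiffOn_pd hs hQR i).mul (contDiffOn_pd hs hTW i)
  have hK : ContDiffOn ℝ (⊤ : ℕ∞)
      (fun y => ∑ i, pd i (fun z => q z * r z) y * pd i (fun z => t z * w z) y) s :=
    ContDiffOn.sum fun i _ => hKi i
  have hG1 : ContDiffOn ℝ (⊤ : ℕ∞) (fun z => q z * r z * lap (fun a => t a * w a) z) s :=
    hQR.mul (contDiffOn_lap hs hTW)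
  have hG2 : ContDiffOn ℝ (⊤ : ℕ∞) (fun z => t z * w z * lap (fun a => q a * r a) z) s :=
    hTW.mul (contDiffOn_lap hs hQR)
  have hG3 : ContDiffOn ℝ (⊤ : ℕ∞)
      (fun z => 2 * ∑ i, pd i (fun a => q a * r a) z * pd i (fun a => t a * w a) z) s := by
    exact (contDiffOn_const (c := (2:ℝ))).mul hK
  have hG23 : ContDiffOn ℝ (⊤ : ℕ∞)
      (fun z => t z * w z * lap (fun a => q a * r a) z
        + 2 * ∑ i, pd i (fun a => q a * r a) z * pd i (fun a => t a * w a) z) s := hG2.add hG3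
  have hQR0 : q x * r x = 0 := by rw [hq0]; ring
  have hTW0 : t x * w x = 0 := by rw [ht0]; ring
  have hpdQR0 : ∀ i, pd i (fun z => q z * r z) x = 0 := by
    intro i
    rw [pd_mul (diffAt hs hq hx) (diffAt hs hr hx) i, hq0, hr0]; ring
  have hpdTW0 : ∀ i, pd i (fun z => t z * w z) x = 0 := by
    intro i
    rw [pd_mul (diffAt hs ht hx) (diffAt hs hw hx) i, ht0, hw0]; ring
  have hlapQR : lap (fun z => q z * r z) x = 2 * ∑ i, pd i q x * pd i r x := by
    rw [lap_mul hs hq hr hx, hq0, hr0]; ring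
  have hlapTW : lap (fun z => t z * w z) x = 2 * ∑ i, pd i t x * pd i w x := by
    rw [lap_mul hs ht hw hx, ht0, hw0]; ring
  have e1 : lap (fun z => q z * r z * lap (fun a => t a * w a) z) x
      = (2 * ∑ i, pd i t x * pd i w x) * (2 * ∑ i, pd i q x * pd i r x) := by
    rw [lap_mul hs hQR (contDiffOn_lap hs hTW) hx, hQR0, hlapQR, hlapTW]
    have hz : ∀ i : Fin k, pd i (fun z => q z * r z) x
        * pd i (lap (fun a => t a * w a)) x = 0 := by
      intro i; rw [hpdQR0 i]; ring
    rw [Finset.sum_congr rfl fun i _ => hz i]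
    simp
  have e2 : lap (fun z => t z * w z * lap (fun a => q a * r a) z) x
      = (2 * ∑ i, pd i q x * pd i r x) * (2 * ∑ i, pd i t x * pd i w x) := by
    rw [lap_mul hs hTW (contDiffOn_lap hs hQR) hx, hTW0, hlapQR, hlapTW]
    have hz : ∀ i : Fin k, pd i (fun z => t z * w z) x
        * pd i (lap (fun a => q a * r a)) x = 0 := by
      intro i; rw [hpdTW0 i]; ring
    rw [Finset.sum_congr rfl fun i _ => hz i]
    simp
  have eK : ∀ i : Fin k,
      lap (fun y => pd i (fun z => q z * r z) y * pd i (fun z => t z * w z) y) x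
        = 2 * ∑ j, (pd j q x * pd i r x + pd i q x * pd j r x)
            * (pd j t x * pd i w x + pd i t x * pd j w x) := by
    intro i
    rw [lap_mul hs (contDiffOn_pd hs hQR i) (contDiffOn_pd hs hTW i) hx, hpdQR0 i, hpdTW0 i]
    have hterm : ∀ j : Fin k,
        pd j (pd i (fun z => q z * r z)) x * pd j (pd i (fun z => t z * w z)) x
          = (pd j q x * pd i r x + pd i q x * pd j r x)
            * (pd j t x * pd i w x + pd i t x * pd j w x) := by
      intro j
      rw [pd_pd_mul_zero hs hq hr hx hq0 hr0 i j, pd_pd_mul_zero hs ht hw hx ht0 hw0 i j]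
    rw [Finset.sum_congr rfl fun j _ => hterm j]
    ring
  have e3 : lap (fun z => 2 * ∑ i, pd i (fun a => q a * r a) z * pd i (fun a => t a * w a) z) x
      = 2 * (4 * ((∑ j, pd j q x * pd j t x) * (∑ i, pd i r x * pd i w x)
           + (∑ j, pd j q x * pd j w x) * (∑ i, pd i r x * pd i t x))) := by
    calc lap (fun z => 2 * ∑ i, pd i (fun a => q a * r a) z * pd i (fun a => t a * w a) z) x
        = 2 * lap (fun z => ∑ i, pd i (fun a => q a * r a) z * pd i (fun a => t a * w a) z) x :=
          lap_const_mul hs hK 2 hx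
      _ = 2 * ∑ i, lap (fun y => pd i (fun z => q z * r z) y * pd i (fun z => t z * w z) y) x := by
          rw [lap_sum hs Finset.univ (fun i _ => hKi i) hx]
      _ = 2 * ∑ i, 2 * ∑ j, (pd j q x * pd i r x + pd i q x * pd j r x)
            * (pd j t x * pd i w x + pd i t x * pd j w x) := by
          rw [Finset.sum_congr rfl fun i _ => eK i]
      _ = _ := by rw [quad_sum_algebra]
  calc lap (lap (fun y => q y * r y * (t y * w y))) x
      = lap (fun z => q z * r z * lap (fun a => t a * w a) z
          + (t z * w z * lap (fun a => q a * r a) z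
            + 2 * ∑ i, pd i (fun a => q a * r a) z * pd i (fun a => t a * w a) z)) x := by
        refine lap_congr hs (fun y hy => ?_) hx
        exact (lap_mul hs hQR hTW hy).trans (by ring)
    _ = lap (fun z => q z * r z * lap (fun a => t a * w a) z) x
        + lap (fun z => t z * w z * lap (fun a => q a * r a) z
            + 2 * ∑ i, pd i (fun a => q a * r a) z * pd i (fun a => t a * w a) z) x :=
        lap_add hs hG1 hG23 hx
    _ = lap (fun z => q z * r z * lap (fun a => t a * w a) z) x
        + (lap (fun z => t z * w z * lap (fun a => q a * r a) z) x
          + lap (fun z => 2 * ∑ i, pd i (fun a => q a * r a) z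
              * pd i (fun a => t a * w a) z) x) := by
        have h5 := lap_add hs hG2 hG3 hx
        linarith [h5]
    _ = _ := by rw [e1, e2, e3]; ring

-- ### Target-side test functions ###

lemma pd_coord (α : Fin n) (c : ℝ) (i : Fin n) (y : E n) :
    pd i (fun z : E n => z α - c) y = if α = i then 1 else 0 := by
  rw [pd_sub_const]
  show fderiv ℝ (fun z : E n => z α) y (EuclideanSpace.single i 1) = _
  have h : fderiv ℝ (fun z : E n => z α) y = EuclideanSpace.proj (𝕜 := ℝ) α :=
    (EuclideanSpace.proj (𝕜 := ℝ) α).hasFDerivAt.fderiv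
  rw [h]
  show (EuclideanSpace.single i (1:ℝ)) α = _
  rw [EuclideanSpace.single_apply]

lemma contDiffOn_coord (α : Fin n) (c : ℝ) :
    ContDiffOn ℝ (⊤ : ℕ∞) (fun z : E n => z α - c) (Set.univ : Set (E n)) :=
  ((EuclideanSpace.proj (𝕜 := ℝ) α).contDiff.sub contDiff_const).contDiffOn

lemma kappa_coord (α β : Fin n) (cα cβ : ℝ) (y : E n) :
    ∑ i, pd i (fun z : E n => z α - cα) y * pd i (fun z : E n => z β - cβ) y
      = if α = β then 1 else 0 := by
  have h : ∀ i : Fin n, pd i (fun z : E n => z α - cα) y * pd i (fun z : E n => z β - cβ) y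
      = if α = i then (if β = i then (1:ℝ) else 0) else 0 := by
    intro i
    rw [pd_coord, pd_coord]
    split <;> simp
  rw [Finset.sum_congr rfl fun i _ => h i, Finset.sum_ite_eq]
  simp [eq_comm]

lemma lap_coord (α : Fin n) (c : ℝ) (y : E n) :
    lap (fun z : E n => z α - c) y = 0 := by
  rw [lap_eq]
  refine Finset.sum_eq_zero fun i _ => ?_
  have h1 : ∀ z ∈ (Set.univ : Set (E n)), pd i (fun z : E n => z α - c) z
      = (fun _ => if α = i then (1:ℝ) else 0) z := fun z _ => pd_coord α c i z
  rw [pd_congr isOpen_univ h1 (Set.mem_univ y) i]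
  exact pd_const _ y i

lemma lap_coord_mul (α β : Fin n) (cα cβ : ℝ) (y : E n) :
    lap (fun z : E n => (z α - cα) * (z β - cβ)) y = 2 * (if α = β then 1 else 0) := by
  rw [lap_mul isOpen_univ (contDiffOn_coord α cα) (contDiffOn_coord β cβ) (Set.mem_univ y),
    lap_coord, lap_coord, kappa_coord]
  ring

lemma pd_coord_mul (α β : Fin n) (cα cβ : ℝ) (i : Fin n) (y : E n) :
    pd i (fun z : E n => (z α - cα) * (z β - cβ)) y
      = (y α - cα) * (if β = i then 1 else 0) + (y β - cβ) * (if α = i then 1 else 0) := by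
  rw [pd_mul (diffAt isOpen_univ (contDiffOn_coord α cα) (Set.mem_univ y))
    (diffAt isOpen_univ (contDiffOn_coord β cβ) (Set.mem_univ y)) i, pd_coord, pd_coord]

lemma contDiffOn_coord_mul (α β : Fin n) (cα cβ : ℝ) :
    ContDiffOn ℝ (⊤ : ℕ∞) (fun z : E n => (z α - cα) * (z β - cβ)) (Set.univ : Set (E n)) :=
  (contDiffOn_coord α cα).mul (contDiffOn_coord β cβ)

/-- Laplacian of `(z_α-c_α)²(z_γ-c_γ)(z_δ-c_δ)` style quartics: general product form. -/
lemma lap_quart (α β γ δ : Fin n) (cα cβ cγ cδ : ℝ) (y : E n) :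
    lap (fun z : E n => (z α - cα) * (z β - cβ) * ((z γ - cγ) * (z δ - cδ))) y
      = (y α - cα) * (y β - cβ) * (2 * (if γ = δ then 1 else 0))
        + (y γ - cγ) * (y δ - cδ) * (2 * (if α = β then 1 else 0))
        + 2 * ((y α - cα) * (y γ - cγ) * (if β = δ then 1 else 0)
             + (y α - cα) * (y δ - cδ) * (if β = γ then 1 else 0)
             + (y β - cβ) * (y γ - cγ) * (if α = δ then 1 else 0)
             + (y β - cβ) * (y δ - cδ) * (if α = γ then 1 else 0)) := by
  rw [lap_mul isOpen_univ (contDiffOn_coord_mul α β cα cβ) (contDiffOn_coord_mul γ δ cγ cδ)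
    (Set.mem_univ y), lap_coord_mul, lap_coord_mul]
  have h : ∀ i : Fin n,
      pd i (fun z : E n => (z α - cα) * (z β - cβ)) y
        * pd i (fun z : E n => (z γ - cγ) * (z δ - cδ)) y
      = (y α - cα) * (y γ - cγ) * ((if β = i then (1:ℝ) else 0) * (if δ = i then 1 else 0))
        + (y α - cα) * (y δ - cδ) * ((if β = i then (1:ℝ) else 0) * (if γ = i then 1 else 0))
        + (y β - cβ) * (y γ - cγ) * ((if α = i then (1:ℝ) else 0) * (if δ = i then 1 else 0))
        + (y β - cβ) * (y δ - cδ) * ((if α = i then (1:ℝ) else 0) * (if γ = i then 1 else 0)) := by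
    intro i
    rw [pd_coord_mul, pd_coord_mul]
    ring
  rw [Finset.sum_congr rfl fun i _ => h i]
  have hsum : ∀ (ρ σ : Fin n), ∑ i : Fin n,
      (if ρ = i then (1:ℝ) else 0) * (if σ = i then 1 else 0) = if ρ = σ then 1 else 0 := by
    intro ρ σ
    have h2 : ∀ i : Fin n, (if ρ = i then (1:ℝ) else 0) * (if σ = i then 1 else 0)
        = if ρ = i then (if σ = i then (1:ℝ) else 0) else 0 := by
      intro i; split <;> simp
    rw [Finset.sum_congr rfl fun i _ => h2 i, Finset.sum_ite_eq]
    simp [eq_comm]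
  rw [Finset.sum_add_distrib, Finset.sum_add_distrib, Finset.sum_add_distrib,
    ← Finset.mul_sum, ← Finset.mul_sum, ← Finset.mul_sum, ← Finset.mul_sum,
    hsum, hsum, hsum, hsum]

-- ### Forward direction ###

lemma fwd_comp {U : Set (E m)} {φ : E m → E n} (hg : IsGHM φ U) (α : Fin n) :
    ∀ x ∈ U, lap (lap (fun y => φ y α)) x = 0 := by
  intro x hx
  have hharm : HarmonicOn (fun z : E n => z α - 0) Set.univ :=
    ⟨contDiffOn_coord α 0, fun y _ => lap_coord α 0 y⟩
  have hb := hg Set.univ isOpen_univ _ hharm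
  have h0 := hb.2 x ⟨hx, Set.mem_univ _⟩
  have hfun : ((fun z : E n => z α - 0) ∘ φ) = fun y => φ y α := by
    funext y; simp
  rw [hfun] at h0
  exact h0

lemma fwd_mul {U : Set (E m)} {φ : E m → E n} (hg : IsGHM φ U) {α β : Fin n} (hαβ : α ≠ β) :
    ∀ x ∈ U, lap (lap (fun y => φ y α * φ y β)) x = 0 := by
  intro x hx
  have hharm : HarmonicOn (fun z : E n => (z α - 0) * (z β - 0)) Set.univ := by
    refine ⟨contDiffOn_coord_mul α β 0 0, fun y _ => ?_⟩
    rw [lap_coord_mul, if_neg hαβ]; ring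
  have hb := hg Set.univ isOpen_univ _ hharm
  have h0 := hb.2 x ⟨hx, Set.mem_univ _⟩
  have hfun : ((fun z : E n => (z α - 0) * (z β - 0)) ∘ φ) = fun y => φ y α * φ y β := by
    funext y; simp
  rw [hfun] at h0
  exact h0

lemma fwd_sq {U : Set (E m)} {φ : E m → E n} (hg : IsGHM φ U) {α β : Fin n} (hαβ : α ≠ β) :
    ∀ x ∈ U, lap (lap (fun y => (φ y α) ^ 2 - (φ y β) ^ 2)) x = 0 := by
  intro x hx
  have hharm : HarmonicOn
      (fun z : E n => (z α - 0) * (z α - 0) - (z β - 0) * (z β - 0)) Set.univ := by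
    refine ⟨(contDiffOn_coord_mul α α 0 0).sub (contDiffOn_coord_mul β β 0 0), fun y _ => ?_⟩
    rw [lap_sub isOpen_univ (contDiffOn_coord_mul α α 0 0) (contDiffOn_coord_mul β β 0 0)
      (Set.mem_univ y), lap_coord_mul, lap_coord_mul]
    simp
  have hb := hg Set.univ isOpen_univ _ hharm
  have h0 := hb.2 x ⟨hx, Set.mem_univ _⟩
  have hfun : ((fun z : E n => (z α - 0) * (z α - 0) - (z β - 0) * (z β - 0)) ∘ φ)
      = fun y => (φ y α) ^ 2 - (φ y β) ^ 2 := by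
    funext y
    show (φ y α - 0) * (φ y α - 0) - (φ y β - 0) * (φ y β - 0) = _
    ring
  rw [hfun] at h0
  exact h0

lemma fwd_pair {U : Set (E m)} (hU : IsOpen U) {φ : E m → E n}
    (hφ : ContDiffOn ℝ (⊤ : ℕ∞) φ U) (hg : IsGHM φ U)
    {α β : Fin n} (hαβ : α ≠ β) {x : E m} (hx : x ∈ U) :
    (∑ i, pd i (fun y => φ y α) x * pd i (fun y => φ y α) x)
      = (∑ i, pd i (fun y => φ y β) x * pd i (fun y => φ y β) x)
    ∧ (∑ i, pd i (fun y => φ y α) x * pd i (fun y => φ y β) x) = 0 := by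
  set p : E n := φ x with hp
  -- domain-side functions
  have hu : ContDiffOn ℝ (⊤ : ℕ∞) (fun z => φ z α - p α) U :=
    (contDiffOn_comp' hφ α).sub contDiffOn_const
  have hw : ContDiffOn ℝ (⊤ : ℕ∞) (fun z => φ z β - p β) U :=
    (contDiffOn_comp' hφ β).sub contDiffOn_const
  have hu0 : φ x α - p α = 0 := sub_self _
  have hw0 : φ x β - p β = 0 := sub_self _
  have hpdu : ∀ i : Fin m, pd i (fun z => φ z α - p α) x = pd i (fun y => φ y α) x :=
    fun i => pd_sub_const (p α) x i
  have hpdw : ∀ i : Fin m, pd i (fun z => φ z β - p β) x = pd i (fun y => φ y β) x :=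
    fun i => pd_sub_const (p β) x i
  set a : ℝ := ∑ i, pd i (fun y => φ y α) x * pd i (fun y => φ y α) x with ha
  set b : ℝ := ∑ i, pd i (fun y => φ y β) x * pd i (fun y => φ y β) x with hb
  set c : ℝ := ∑ i, pd i (fun y => φ y α) x * pd i (fun y => φ y β) x with hc
  have hkaa : ∑ i, pd i (fun z => φ z α - p α) x * pd i (fun z => φ z α - p α) x = a := by
    rw [ha]; exact Finset.sum_congr rfl fun i _ => by rw [hpdu i]
  have hkbb : ∑ i, pd i (fun z => φ z β - p β) x * pd i (fun z => φ z β - p β) x = b := by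
    rw [hb]; exact Finset.sum_congr rfl fun i _ => by rw [hpdw i]
  have hkab : ∑ i, pd i (fun z => φ z α - p α) x * pd i (fun z => φ z β - p β) x = c := by
    rw [hc]; exact Finset.sum_congr rfl fun i _ => by rw [hpdu i, hpdw i]
  have hkba : ∑ i, pd i (fun z => φ z β - p β) x * pd i (fun z => φ z α - p α) x = c := by
    rw [hc]
    exact Finset.sum_congr rfl fun i _ => by rw [hpdu i, hpdw i]; ring
  -- quartic laplacians on the domain side
  have hQ1 : lap (lap (fun z => (φ z α - p α) * (φ z α - p α)
      * ((φ z α - p α) * (φ z α - p α)))) x = 8 * (a * a + a * a + a * a) := by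
    rw [lap_lap_quad hU hu hu hu hu hx hu0 hu0 hu0 hu0, hkaa]
  have hQ2 : lap (lap (fun z => (φ z α - p α) * (φ z α - p α)
      * ((φ z β - p β) * (φ z β - p β)))) x = 8 * (a * b + c * c + c * c) := by
    rw [lap_lap_quad hU hu hu hw hw hx hu0 hu0 hw0 hw0, hkaa, hkbb, hkab]
  have hQ3 : lap (lap (fun z => (φ z β - p β) * (φ z β - p β)
      * ((φ z β - p β) * (φ z β - p β)))) x = 8 * (b * b + b * b + b * b) := by
    rw [lap_lap_quad hU hw hw hw hw hx hw0 hw0 hw0 hw0, hkbb]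
  have hQ4 : lap (lap (fun z => (φ z α - p α) * (φ z α - p α)
      * ((φ z α - p α) * (φ z β - p β)))) x = 8 * (a * c + a * c + c * a) := by
    rw [lap_lap_quad hU hu hu hu hw hx hu0 hu0 hu0 hw0, hkaa, hkab]
  have hQ5 : lap (lap (fun z => (φ z β - p β) * (φ z β - p β)
      * ((φ z α - p α) * (φ z β - p β)))) x = 8 * (b * c + c * b + b * c) := by
    rw [lap_lap_quad hU hw hw hu hw hx hw0 hw0 hu0 hw0, hkbb, hkba, hkab]
  -- first test function
  have hharm1 : HarmonicOn (fun z : E n => (z α - p α) * (z α - p α)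
      * ((z α - p α) * (z α - p α))
      - 6 * ((z α - p α) * (z α - p α) * ((z β - p β) * (z β - p β)))
      + (z β - p β) * (z β - p β) * ((z β - p β) * (z β - p β))) Set.univ := by
    constructor
    · exact (((contDiffOn_coord_mul α α (p α) (p α)).mul
        (contDiffOn_coord_mul α α (p α) (p α))).sub
        (contDiffOn_const.mul ((contDiffOn_coord_mul α α (p α) (p α)).mul
          (contDiffOn_coord_mul β β (p β) (p β))))).add
        ((contDiffOn_coord_mul β β (p β) (p β)).mul (contDiffOn_coord_mul β β (p β) (p β)))
    · intro y _
      have c1 : lap (fun z : E n => (z α - p α) * (z α - p α) * ((z α - p α) * (z α - p α))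
          - 6 * ((z α - p α) * (z α - p α) * ((z β - p β) * (z β - p β)))
          + (z β - p β) * (z β - p β) * ((z β - p β) * (z β - p β))) y
          = lap (fun z : E n => (z α - p α) * (z α - p α) * ((z α - p α) * (z α - p α))
            - 6 * ((z α - p α) * (z α - p α) * ((z β - p β) * (z β - p β)))) y
          + lap (fun z : E n => (z β - p β) * (z β - p β) * ((z β - p β) * (z β - p β))) y :=
        lap_add isOpen_univ
          (((contDiffOn_coord_mul α α (p α) (p α)).mul (contDiffOn_coord_mul α α (p α) (p α))).sub
            (contDiffOn_const.mul ((contDiffOn_coord_mul α α (p α) (p α)).mul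
              (contDiffOn_coord_mul β β (p β) (p β)))))
          ((contDiffOn_coord_mul β β (p β) (p β)).mul (contDiffOn_coord_mul β β (p β) (p β)))
          (Set.mem_univ y)
      have c2 : lap (fun z : E n => (z α - p α) * (z α - p α) * ((z α - p α) * (z α - p α))
            - 6 * ((z α - p α) * (z α - p α) * ((z β - p β) * (z β - p β)))) y
          = lap (fun z : E n => (z α - p α) * (z α - p α) * ((z α - p α) * (z α - p α))) y
          - lap (fun z : E n =>
              6 * ((z α - p α) * (z α - p α) * ((z β - p β) * (z β - p β)))) y :=
        lap_sub isOpen_univ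
          ((contDiffOn_coord_mul α α (p α) (p α)).mul (contDiffOn_coord_mul α α (p α) (p α)))
          (contDiffOn_const.mul ((contDiffOn_coord_mul α α (p α) (p α)).mul
            (contDiffOn_coord_mul β β (p β) (p β)))) (Set.mem_univ y)
      have c3 : lap (fun z : E n =>
            6 * ((z α - p α) * (z α - p α) * ((z β - p β) * (z β - p β)))) y
          = 6 * lap (fun z : E n =>
              (z α - p α) * (z α - p α) * ((z β - p β) * (z β - p β))) y :=
        lap_const_mul isOpen_univ
          ((contDiffOn_coord_mul α α (p α) (p α)).mul (contDiffOn_coord_mul β β (p β) (p β)))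
          6 (Set.mem_univ y)
      rw [c1, c2, c3, lap_quart α α α α (p α) (p α) (p α) (p α) y,
        lap_quart α α β β (p α) (p α) (p β) (p β) y,
        lap_quart β β β β (p β) (p β) (p β) (p β) y]
      simp only [if_neg hαβ, if_neg (Ne.symm hαβ), if_pos rfl]
      ring
  have hb1 := hg Set.univ isOpen_univ _ hharm1
  have h01 : lap (lap (fun z => (φ z α - p α) * (φ z α - p α) * ((φ z α - p α) * (φ z α - p α))
      - 6 * ((φ z α - p α) * (φ z α - p α) * ((φ z β - p β) * (φ z β - p β)))
      + (φ z β - p β) * (φ z β - p β) * ((φ z β - p β) * (φ z β - p β)))) x = 0 :=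
    hb1.2 x ⟨hx, Set.mem_univ _⟩
  -- split it up on the domain side
  have hF1 : ContDiffOn ℝ (⊤ : ℕ∞) (fun z => (φ z α - p α) * (φ z α - p α)
      * ((φ z α - p α) * (φ z α - p α))) U := (hu.mul hu).mul (hu.mul hu)
  have hF2 : ContDiffOn ℝ (⊤ : ℕ∞) (fun z => (φ z α - p α) * (φ z α - p α)
      * ((φ z β - p β) * (φ z β - p β))) U := (hu.mul hu).mul (hw.mul hw)
  have hF3 : ContDiffOn ℝ (⊤ : ℕ∞) (fun z => (φ z β - p β) * (φ z β - p β)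
      * ((φ z β - p β) * (φ z β - p β))) U := (hw.mul hw).mul (hw.mul hw)
  have d1 : lap (lap (fun z => (φ z α - p α) * (φ z α - p α) * ((φ z α - p α) * (φ z α - p α))
      - 6 * ((φ z α - p α) * (φ z α - p α) * ((φ z β - p β) * (φ z β - p β)))
      + (φ z β - p β) * (φ z β - p β) * ((φ z β - p β) * (φ z β - p β)))) x
      = lap (lap (fun z => (φ z α - p α) * (φ z α - p α) * ((φ z α - p α) * (φ z α - p α))
        - 6 * ((φ z α - p α) * (φ z α - p α) * ((φ z β - p β) * (φ z β - p β))))) x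
      + lap (lap (fun z => (φ z β - p β) * (φ z β - p β)
          * ((φ z β - p β) * (φ z β - p β)))) x :=
    lap_lap_add hU (hF1.sub (contDiffOn_const.mul hF2)) hF3 hx
  have d2 : lap (lap (fun z => (φ z α - p α) * (φ z α - p α) * ((φ z α - p α) * (φ z α - p α))
        - 6 * ((φ z α - p α) * (φ z α - p α) * ((φ z β - p β) * (φ z β - p β))))) x
      = lap (lap (fun z => (φ z α - p α) * (φ z α - p α)
          * ((φ z α - p α) * (φ z α - p α)))) x
      - lap (lap (fun z =>
          6 * ((φ z α - p α) * (φ z α - p α) * ((φ z β - p β) * (φ z β - p β))))) x :=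
    lap_lap_sub hU hF1 (contDiffOn_const.mul hF2) hx
  have d3 : lap (lap (fun z =>
        6 * ((φ z α - p α) * (φ z α - p α) * ((φ z β - p β) * (φ z β - p β))))) x
      = 6 * lap (lap (fun z => (φ z α - p α) * (φ z α - p α)
          * ((φ z β - p β) * (φ z β - p β)))) x :=
    lap_lap_const_mul hU hF2 6 hx
  have E1 : 8 * (a * a + a * a + a * a) - 6 * (8 * (a * b + c * c + c * c))
      + 8 * (b * b + b * b + b * b) = 0 := by
    rw [← hQ1, ← hQ2, ← hQ3]
    rw [d2, d3] at d1
    linarith [h01, d1]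
  -- second test function
  have hharm2 : HarmonicOn (fun z : E n => (z α - p α) * (z α - p α)
      * ((z α - p α) * (z β - p β))
      - (z β - p β) * (z β - p β) * ((z α - p α) * (z β - p β))) Set.univ := by
    constructor
    · exact (((contDiffOn_coord_mul α α (p α) (p α)).mul
        (contDiffOn_coord_mul α β (p α) (p β)))).sub
        ((contDiffOn_coord_mul β β (p β) (p β)).mul (contDiffOn_coord_mul α β (p α) (p β)))
    · intro y _
      have c2 : lap (fun z : E n => (z α - p α) * (z α - p α) * ((z α - p α) * (z β - p β))
            - (z β - p β) * (z β - p β) * ((z α - p α) * (z β - p β))) y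
          = lap (fun z : E n => (z α - p α) * (z α - p α) * ((z α - p α) * (z β - p β))) y
          - lap (fun z : E n => (z β - p β) * (z β - p β) * ((z α - p α) * (z β - p β))) y :=
        lap_sub isOpen_univ
          ((contDiffOn_coord_mul α α (p α) (p α)).mul (contDiffOn_coord_mul α β (p α) (p β)))
          ((contDiffOn_coord_mul β β (p β) (p β)).mul (contDiffOn_coord_mul α β (p α) (p β)))
          (Set.mem_univ y)
      rw [c2, lap_quart α α α β (p α) (p α) (p α) (p β) y,
        lap_quart β β α β (p β) (p β) (p α) (p β) y]
      simp only [if_neg hαβ, if_neg (Ne.symm hαβ), if_pos rfl]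
      ring
  have hb2 := hg Set.univ isOpen_univ _ hharm2
  have h02 : lap (lap (fun z => (φ z α - p α) * (φ z α - p α) * ((φ z α - p α) * (φ z β - p β))
      - (φ z β - p β) * (φ z β - p β) * ((φ z α - p α) * (φ z β - p β)))) x = 0 :=
    hb2.2 x ⟨hx, Set.mem_univ _⟩
  have hF4 : ContDiffOn ℝ (⊤ : ℕ∞) (fun z => (φ z α - p α) * (φ z α - p α)
      * ((φ z α - p α) * (φ z β - p β))) U := (hu.mul hu).mul (hu.mul hw)
  have hF5 : ContDiffOn ℝ (⊤ : ℕ∞) (fun z => (φ z β - p β) * (φ z β - p β)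
      * ((φ z α - p α) * (φ z β - p β))) U := (hw.mul hw).mul (hu.mul hw)
  have d4 : lap (lap (fun z => (φ z α - p α) * (φ z α - p α) * ((φ z α - p α) * (φ z β - p β))
      - (φ z β - p β) * (φ z β - p β) * ((φ z α - p α) * (φ z β - p β)))) x
      = lap (lap (fun z => (φ z α - p α) * (φ z α - p α)
          * ((φ z α - p α) * (φ z β - p β)))) x
      - lap (lap (fun z => (φ z β - p β) * (φ z β - p β)
          * ((φ z α - p α) * (φ z β - p β)))) x :=
    lap_lap_sub hU hF4 hF5 hx
  have E2 : 8 * (a * c + a * c + c * a) - 8 * (b * c + c * b + b * c) = 0 := by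
    rw [← hQ4, ← hQ5]
    linarith [h02, d4]
  -- algebra: conclude a = b and c = 0
  have h4 : (a - b) ^ 2 = 4 * c ^ 2 := by linear_combination E1 / 24
  have h5 : c * (a - b) = 0 := by linear_combination E2 / 24
  have h6 : c ^ 2 * (a - b) ^ 2 = 0 := by
    have h7 := congrArg (· ^ 2) h5
    simpa [mul_pow] using h7
  have h8 : 4 * c ^ 4 = 0 := by linear_combination h6 - c ^ 2 * h4
  have hc0 : c = 0 := by
    have h9 : c ^ 4 = 0 := by linarith
    exact pow_eq_zero_iff (by norm_num) |>.mp h9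
  have hab : a = b := by
    have h10 : (a - b) ^ 2 = 0 := by rw [h4, hc0]; ring
    have h11 : a - b = 0 := pow_eq_zero_iff (by norm_num) |>.mp h10
    linarith
  exact ⟨hab, hc0⟩

lemma fwd_hwc {U : Set (E m)} (hU : IsOpen U) {φ : E m → E n}
    (hφ : ContDiffOn ℝ (⊤ : ℕ∞) φ U) (hg : IsGHM φ U) : IsHWC φ U := by
  rcases Nat.eq_zero_or_pos n with hn | hn
  · refine ⟨fun _ => 0, fun _ => le_rfl, fun x hx α => ?_⟩
    exact absurd α.isLt (by omega)
  · have hα₀ : (0:ℕ) < n := hn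
    set α₀ : Fin n := ⟨0, hα₀⟩
    refine ⟨fun x => Real.sqrt (∑ i, pd i (fun y => φ y α₀) x * pd i (fun y => φ y α₀) x),
      fun x => Real.sqrt_nonneg _, ?_⟩
    intro x hx α β
    have hsq : 0 ≤ ∑ i, pd i (fun y => φ y α₀) x * pd i (fun y => φ y α₀) x :=
      Finset.sum_nonneg fun i _ => mul_self_nonneg _
    have hlam2 : Real.sqrt (∑ i, pd i (fun y => φ y α₀) x * pd i (fun y => φ y α₀) x) ^ 2
        = ∑ i, pd i (fun y => φ y α₀) x * pd i (fun y => φ y α₀) x :=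
      Real.sq_sqrt hsq
    rw [inner_gradient_eq, hlam2]
    by_cases hab : α = β
    · subst hab
      rw [if_pos rfl, mul_one]
      by_cases h0 : α = α₀
      · subst h0; rfl
      · exact (fwd_pair hU hφ hg h0 hx).1
    · rw [if_neg hab, mul_zero]
      exact (fwd_pair hU hφ hg hab hx).2

-- ### Reverse direction ###

lemma lap_pd_of_harmonic {V : Set (E n)} (hV : IsOpen V) {f : E n → ℝ}
    (hf : ContDiffOn ℝ (⊤ : ℕ∞) f V) (hlap : ∀ y ∈ V, lap f y = 0) {p : E n} (hp : p ∈ V)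
    (α : Fin n) : lap (pd α f) p = 0 := by
  rw [lap_eq]
  have key : ∀ β : Fin n, pd β (pd β (pd α f)) p = pd α (pd β (pd β f)) p := by
    intro β
    have h1 : ∀ y ∈ V, pd β (pd α f) y = pd α (pd β f) y :=
      fun y hy => pd_comm hV hf hy β α
    calc pd β (pd β (pd α f)) p
        = pd β (pd α (pd β f)) p := pd_congr hV h1 hp β
      _ = pd α (pd β (pd β f)) p := pd_comm hV (contDiffOn_pd hV hf β) hp β α
  rw [Finset.sum_congr rfl fun β _ => key β]
  rw [← pd_sum Finset.univ
    (fun β _ => diffAt hV (contDiffOn_pd hV (contDiffOn_pd hV hf β) β) hp) α]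
  have h2 : ∀ y ∈ V, (fun z => ∑ β, pd β (pd β f) z) y = (fun _ => (0:ℝ)) y := by
    intro y hy
    exact (lap_eq f y).symm.trans (hlap y hy)
  rw [pd_congr hV h2 hp α, pd_const]


lemma final_algebra {n : ℕ} (D Q : Fin n → Fin n → ℝ) (Λ : Fin n → ℝ)
    (hDsym : ∀ α β, D α β = D β α)
    (hoff : ∀ α β, α ≠ β → Λ α * Λ β + Q α β + Q β α = 0)
    (hdiag : ∀ α β, Λ α * Λ α + 2 * Q α α = Λ β * Λ β + 2 * Q β β)
    (htr : ∑ α, D α α = 0) :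
    ∑ α, ∑ β, D α β * (Λ α * Λ β + 2 * Q α β) = 0 := by
  rcases Nat.eq_zero_or_pos n with hn | hn
  · have he : (Finset.univ : Finset (Fin n)) = ∅ := by
      ext a; exact absurd a.isLt (by omega)
    rw [he]; simp
  · have hS : ∑ α, ∑ β, D α β * Q α β = ∑ α, ∑ β, D α β * Q β α := by
      calc ∑ α, ∑ β, D α β * Q α β = ∑ β, ∑ α, D α β * Q α β := Finset.sum_comm
        _ = ∑ α, ∑ β, D α β * Q β α := by
            exact Finset.sum_congr rfl fun α _ => Finset.sum_congr rfl fun β _ => by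
              rw [hDsym α β]
    set α₀ : Fin n := ⟨0, hn⟩
    have hmain : ∑ α, ∑ β, D α β * (Λ α * Λ β + 2 * Q α β)
        = ∑ α, ∑ β, D α β * (Λ α * Λ β + Q α β + Q β α) := by
      have e1 : ∀ α, ∑ β, D α β * (Λ α * Λ β + 2 * Q α β)
          = (∑ β, D α β * (Λ α * Λ β + Q α β + Q β α))
            + ((∑ β, D α β * Q α β) - (∑ β, D α β * Q β α)) := by
        intro α
        rw [← Finset.sum_sub_distrib, ← Finset.sum_add_distrib]
        exact Finset.sum_congr rfl fun β _ => by ring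
      rw [Finset.sum_congr rfl fun α _ => e1 α, Finset.sum_add_distrib,
        Finset.sum_sub_distrib]
      linarith [hS]
    rw [hmain]
    have hB : ∀ α β, Λ α * Λ β + Q α β + Q β α
        = if α = β then (Λ α₀ * Λ α₀ + 2 * Q α₀ α₀) else 0 := by
      intro α β
      by_cases h : α = β
      · subst h
        rw [if_pos rfl]
        linarith [hdiag α α₀]
      · rw [if_neg h]
        exact hoff α β h
    rw [Finset.sum_congr rfl fun α _ => Finset.sum_congr rfl fun β _ => by rw [hB α β]]
    have h6 : ∀ α, ∑ β, D α β * (if α = β then (Λ α₀ * Λ α₀ + 2 * Q α₀ α₀) else 0)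
        = D α α * (Λ α₀ * Λ α₀ + 2 * Q α₀ α₀) := by
      intro α
      have h7 : ∀ β, D α β * (if α = β then (Λ α₀ * Λ α₀ + 2 * Q α₀ α₀) else 0)
          = if α = β then D α β * (Λ α₀ * Λ α₀ + 2 * Q α₀ α₀) else 0 := by
        intro β; split <;> ring
      rw [Finset.sum_congr rfl fun β _ => h7 β, Finset.sum_ite_eq]
      simp
    rw [Finset.sum_congr rfl fun α _ => h6 α, ← Finset.sum_mul, htr, zero_mul]

lemma reverse {U : Set (E m)} (hU : IsOpen U) {φ : E m → E n} (hφ : ContDiffOn ℝ (⊤ : ℕ∞) φ U)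
    (hwc : IsHWC φ U)
    (hbi : ∀ α : Fin n, ∀ x ∈ U, lap (lap (fun y => φ y α)) x = 0)
    (hc : ∀ α β : Fin n, α ≠ β →
      (∀ x ∈ U, lap (lap (fun y => φ y α * φ y β)) x = 0) ∧
      (∀ x ∈ U, lap (lap (fun y => (φ y α) ^ 2 - (φ y β) ^ 2)) x = 0)) :
    IsGHM φ U := by
  intro V hV f hfh
  obtain ⟨hf, hfharm⟩ := hfh
  have hs : IsOpen (U ∩ φ ⁻¹' V) := hφ.continuousOn.isOpen_inter_preimage hU hV
  have hφs : ContDiffOn ℝ (⊤ : ℕ∞) φ (U ∩ φ ⁻¹' V) := hφ.mono Set.inter_subset_left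
  have hmaps : Set.MapsTo φ (U ∩ φ ⁻¹' V) V := fun z hz => hz.2
  refine ⟨hf.comp hφs hmaps, ?_⟩
  intro x hx
  have hxU : x ∈ U := hx.1
  obtain ⟨lam, hlam0, hlam⟩ := hwc
  have hkap : ∀ z ∈ U, ∀ α β : Fin n,
      (∑ i, pd i (fun y => φ y α) z * pd i (fun y => φ y β) z)
        = lam z ^ 2 * (if α = β then 1 else 0) := by
    intro z hz α β
    rw [← inner_gradient_eq]
    exact hlam z hz α β
  have hcomp : ∀ α : Fin n, ContDiffOn ℝ (⊤ : ℕ∞) (fun y => φ y α) U := contDiffOn_comp' hφ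
  have hΛ : ∀ α : Fin n, ContDiffOn ℝ (⊤ : ℕ∞) (lap (fun y => φ y α)) U :=
    fun α => contDiffOn_lap hU (hcomp α)
  have hκ : ∀ α β : Fin n, ContDiffOn ℝ (⊤ : ℕ∞)
      (fun z => ∑ i, pd i (fun y => φ y α) z * pd i (fun y => φ y β) z) U :=
    fun α β => ContDiffOn.sum fun i _ => (contDiffOn_pd hU (hcomp α) i).mul
      (contDiffOn_pd hU (hcomp β) i)
  -- kernel contraction
  have hker : ∀ z ∈ U ∩ φ ⁻¹' V, ∀ (g : E n → ℝ), (∀ p ∈ V, lap g p = 0) →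
      (∑ α, ∑ β, pd β (pd α g) (φ z)
        * ∑ i, pd i (fun y => φ y α) z * pd i (fun y => φ y β) z) = 0 := by
    intro z hz g hg0
    have h3 : ∀ α β : Fin n, pd β (pd α g) (φ z)
        * (∑ i, pd i (fun y => φ y α) z * pd i (fun y => φ y β) z)
        = if α = β then lam z ^ 2 * pd β (pd α g) (φ z) else 0 := by
      intro α β
      rw [hkap z hz.1 α β]
      by_cases h : α = β
      · rw [if_pos h, if_pos h]; ring
      · rw [if_neg h, if_neg h]; ring
    rw [Finset.sum_congr rfl fun α _ => Finset.sum_congr rfl fun β _ => h3 α β]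
    have h4 : ∀ α : Fin n, ∑ β, (if α = β then lam z ^ 2 * pd β (pd α g) (φ z) else 0)
        = lam z ^ 2 * pd α (pd α g) (φ z) := by
      intro α; rw [Finset.sum_ite_eq]; simp
    rw [Finset.sum_congr rfl fun α _ => h4 α, ← Finset.mul_sum]
    have h5 : ∑ α, pd α (pd α g) (φ z) = lap g (φ z) := (lap_eq g (φ z)).symm
    rw [h5, hg0 (φ z) hz.2, mul_zero]
  -- Step A
  have hA : ∀ z ∈ U ∩ φ ⁻¹' V, lap (fun y => f (φ y)) z
      = (fun w => ∑ α, pd α f (φ w) * lap (fun y => φ y α) w) z := by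
    intro z hz
    rw [lap_comp hs hV hφs hmaps hf hz, hker z hz f hfharm, add_zero]
  -- Step B
  show lap (lap (f ∘ φ)) x = 0
  have hTsm : ∀ α : Fin n, ContDiffOn ℝ (⊤ : ℕ∞)
      (fun z => pd α f (φ z) * lap (fun y => φ y α) z) (U ∩ φ ⁻¹' V) := by
    intro α
    exact (((contDiffOn_pd hV hf α).comp hφs hmaps : _)).mul
      ((hΛ α).mono Set.inter_subset_left)
  have hB : lap (lap (f ∘ φ)) x
      = lap (fun w => ∑ α, pd α f (φ w) * lap (fun y => φ y α) w) x :=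
    lap_congr hs hA hx
  rw [hB, lap_sum hs Finset.univ (fun α _ => hTsm α) hx]
  -- Step C : evaluate each summand
  have hFφdiff : ∀ α : Fin n, DifferentiableAt ℝ (fun z => pd α f (φ z)) x :=
    fun α => ((diffAt hV (contDiffOn_pd hV hf α) (hmaps hx)).comp x (diffAt hs hφs hx) : _)
  have hpdFφ : ∀ α : Fin n, ∀ i : Fin m, pd i (fun z => pd α f (φ z)) x
      = ∑ β, pd β (pd α f) (φ x) * pd i (fun y => φ y β) x :=
    fun α i => pd_comp (diffAt hs hφs hx) (diffAt hV (contDiffOn_pd hV hf α) (hmaps hx)) i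
  have hlapFφ : ∀ α : Fin n, lap (fun z => pd α f (φ z)) x
      = ∑ β, pd β (pd α f) (φ x) * lap (fun y => φ y β) x := by
    intro α
    rw [lap_comp hs hV hφs hmaps (contDiffOn_pd hV hf α) hx,
      hker x hx (pd α f) (fun p hp => lap_pd_of_harmonic hV hf hfharm hp α), add_zero]
  have hsummand : ∀ α : Fin n,
      lap (fun z => pd α f (φ z) * lap (fun y => φ y α) z) x
      = ∑ β, pd β (pd α f) (φ x) *
          (lap (fun y => φ y α) x * lap (fun y => φ y β) x
            + 2 * ∑ i, pd i (fun y => φ y β) x * pd i (lap (fun y => φ y α)) x) := by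
    intro α
    have hu' : ContDiffOn ℝ (⊤ : ℕ∞) (fun z => pd α f (φ z)) (U ∩ φ ⁻¹' V) :=
      (contDiffOn_pd hV hf α).comp hφs hmaps
    rw [lap_mul hs hu' ((hΛ α).mono Set.inter_subset_left) hx]
    rw [hbi α x hxU, mul_zero, zero_add, hlapFφ α]
    rw [Finset.sum_congr rfl fun i (_ : i ∈ Finset.univ) => congrArg
      (· * pd i (lap (fun y => φ y α)) x) (hpdFφ α i)]
    have hswap : ∑ i : Fin m, (∑ β, pd β (pd α f) (φ x) * pd i (fun y => φ y β) x)
          * pd i (lap (fun y => φ y α)) x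
        = ∑ β, pd β (pd α f) (φ x)
            * ∑ i, pd i (fun y => φ y β) x * pd i (lap (fun y => φ y α)) x := by
      calc ∑ i : Fin m, (∑ β, pd β (pd α f) (φ x) * pd i (fun y => φ y β) x)
            * pd i (lap (fun y => φ y α)) x
          = ∑ i : Fin m, ∑ β, pd β (pd α f) (φ x) * pd i (fun y => φ y β) x
              * pd i (lap (fun y => φ y α)) x := by
            exact Finset.sum_congr rfl fun i _ => Finset.sum_mul _ _ _
        _ = ∑ β, ∑ i : Fin m, pd β (pd α f) (φ x) * pd i (fun y => φ y β) x
              * pd i (lap (fun y => φ y α)) x := Finset.sum_comm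
        _ = ∑ β, pd β (pd α f) (φ x)
              * ∑ i, pd i (fun y => φ y β) x * pd i (lap (fun y => φ y α)) x := by
            refine Finset.sum_congr rfl fun β _ => ?_
            rw [Finset.mul_sum]
            exact Finset.sum_congr rfl fun i _ => by ring
    rw [hswap]
    rw [Finset.mul_sum, Finset.mul_sum, ← Finset.sum_add_distrib]
    refine Finset.sum_congr rfl fun β _ => ?_
    ring
  rw [Finset.sum_congr rfl fun α _ => hsummand α]
  -- Step D : conclude by the symmetric-algebra lemma
  have hDsym : ∀ α β : Fin n, pd β (pd α f) (φ x) = pd α (pd β f) (φ x) :=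
    fun α β => pd_comm hV hf (hmaps hx) β α
  have htr : ∑ α, pd α (pd α f) (φ x) = 0 :=
    ((lap_eq f (φ x)).symm).trans (hfharm (φ x) hx.2)
  have hoff : ∀ α β : Fin n, α ≠ β →
      lap (fun y => φ y α) x * lap (fun y => φ y β) x
        + (∑ i, pd i (fun y => φ y β) x * pd i (lap (fun y => φ y α)) x)
        + (∑ i, pd i (fun y => φ y α) x * pd i (lap (fun y => φ y β)) x) = 0 := by
    intro α β hne
    have h1 := (hc α β hne).1 x hxU
    have hin : ∀ z ∈ U, lap (fun y => φ y α * φ y β) z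
        = (fun w => φ w α * lap (fun y => φ y β) w + φ w β * lap (fun y => φ y α) w
          + 2 * ∑ i, pd i (fun y => φ y α) w * pd i (fun y => φ y β) w) z :=
      fun z hz => lap_mul hU (hcomp α) (hcomp β) hz
    have h2 : lap (lap (fun y => φ y α * φ y β)) x
        = lap (fun w => φ w α * lap (fun y => φ y β) w + φ w β * lap (fun y => φ y α) w
          + 2 * ∑ i, pd i (fun y => φ y α) w * pd i (fun y => φ y β) w) x :=
      lap_congr hU hin hxU
    have h3 : lap (fun w => φ w α * lap (fun y => φ y β) w + φ w β * lap (fun y => φ y α) w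
          + 2 * ∑ i, pd i (fun y => φ y α) w * pd i (fun y => φ y β) w) x
        = lap (fun w => φ w α * lap (fun y => φ y β) w + φ w β * lap (fun y => φ y α) w) x
          + lap (fun w =>
            2 * ∑ i, pd i (fun y => φ y α) w * pd i (fun y => φ y β) w) x :=
      lap_add hU (((hcomp α).mul (hΛ β)).add ((hcomp β).mul (hΛ α)))
        (contDiffOn_const.mul (hκ α β)) hxU
    have h4 : lap (fun w => φ w α * lap (fun y => φ y β) w + φ w β * lap (fun y => φ y α) w) x
        = lap (fun w => φ w α * lap (fun y => φ y β) w) x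
          + lap (fun w => φ w β * lap (fun y => φ y α) w) x :=
      lap_add hU ((hcomp α).mul (hΛ β)) ((hcomp β).mul (hΛ α)) hxU
    have h5 : lap (fun w => φ w α * lap (fun y => φ y β) w) x
        = φ x α * lap (lap (fun y => φ y β)) x
          + lap (fun y => φ y β) x * lap (fun y => φ y α) x
          + 2 * ∑ i, pd i (fun y => φ y α) x * pd i (lap (fun y => φ y β)) x :=
      lap_mul hU (hcomp α) (hΛ β) hxU
    have h6 : lap (fun w => φ w β * lap (fun y => φ y α) w) x
        = φ x β * lap (lap (fun y => φ y α)) x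
          + lap (fun y => φ y α) x * lap (fun y => φ y β) x
          + 2 * ∑ i, pd i (fun y => φ y β) x * pd i (lap (fun y => φ y α)) x :=
      lap_mul hU (hcomp β) (hΛ α) hxU
    have h7 : lap (fun w =>
          2 * ∑ i, pd i (fun y => φ y α) w * pd i (fun y => φ y β) w) x
        = 2 * lap (fun w =>
            ∑ i, pd i (fun y => φ y α) w * pd i (fun y => φ y β) w) x :=
      lap_const_mul hU (hκ α β) 2 hxU
    have h8 : lap (fun w => ∑ i, pd i (fun y => φ y α) w * pd i (fun y => φ y β) w) x = 0 := by
      have h9 : ∀ z ∈ U, (fun w => ∑ i, pd i (fun y => φ y α) w * pd i (fun y => φ y β) w) z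
          = (fun _ => (0:ℝ)) z := by
        intro z hz
        show (∑ i, pd i (fun y => φ y α) z * pd i (fun y => φ y β) z) = (0:ℝ)
        rw [hkap z hz α β, if_neg hne, mul_zero]
      rw [lap_congr hU h9 hxU]
      exact lap_const 0 x
    have h10 := hbi α x hxU
    have h11 := hbi β x hxU
    rw [h2, h3, h4, h5, h6, h7, h8, h10, h11] at h1
    linarith [h1]
  have hdiag : ∀ α β : Fin n,
      lap (fun y => φ y α) x * lap (fun y => φ y α) x
        + 2 * ∑ i, pd i (fun y => φ y α) x * pd i (lap (fun y => φ y α)) x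
      = lap (fun y => φ y β) x * lap (fun y => φ y β) x
        + 2 * ∑ i, pd i (fun y => φ y β) x * pd i (lap (fun y => φ y β)) x := by
    intro α β
    by_cases hne : α = β
    · rw [hne]
    · have h1 := (hc α β hne).2 x hxU
      have hfn : (fun y => (φ y α) ^ 2 - (φ y β) ^ 2)
          = fun y => φ y α * φ y α - φ y β * φ y β := funext fun y => by ring
      rw [hfn] at h1
      have hin : ∀ z ∈ U, lap (fun y => φ y α * φ y α - φ y β * φ y β) z
          = (fun w => (φ w α * lap (fun y => φ y α) w + φ w α * lap (fun y => φ y α) w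
              + 2 * ∑ i, pd i (fun y => φ y α) w * pd i (fun y => φ y α) w)
            - (φ w β * lap (fun y => φ y β) w + φ w β * lap (fun y => φ y β) w
              + 2 * ∑ i, pd i (fun y => φ y β) w * pd i (fun y => φ y β) w)) z := by
        intro z hz
        rw [lap_sub hU ((hcomp α).mul (hcomp α)) ((hcomp β).mul (hcomp β)) hz,
          lap_mul hU (hcomp α) (hcomp α) hz, lap_mul hU (hcomp β) (hcomp β) hz]
      have h2 : lap (lap (fun y => φ y α * φ y α - φ y β * φ y β)) x
          = lap (fun w => (φ w α * lap (fun y => φ y α) w + φ w α * lap (fun y => φ y α) w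
              + 2 * ∑ i, pd i (fun y => φ y α) w * pd i (fun y => φ y α) w)
            - (φ w β * lap (fun y => φ y β) w + φ w β * lap (fun y => φ y β) w
              + 2 * ∑ i, pd i (fun y => φ y β) w * pd i (fun y => φ y β) w)) x :=
        lap_congr hU hin hxU
      have hsm : ∀ γ : Fin n, ContDiffOn ℝ (⊤ : ℕ∞)
          (fun w => φ w γ * lap (fun y => φ y γ) w + φ w γ * lap (fun y => φ y γ) w
            + 2 * ∑ i, pd i (fun y => φ y γ) w * pd i (fun y => φ y γ) w) U :=
        fun γ => (((hcomp γ).mul (hΛ γ)).add ((hcomp γ).mul (hΛ γ))).add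
          (contDiffOn_const.mul (hκ γ γ))
      have h3 := lap_sub hU (hsm α) (hsm β) hxU
      have hpart : ∀ γ : Fin n,
          lap (fun w => φ w γ * lap (fun y => φ y γ) w + φ w γ * lap (fun y => φ y γ) w
            + 2 * ∑ i, pd i (fun y => φ y γ) w * pd i (fun y => φ y γ) w) x
          = 2 * (lap (fun y => φ y γ) x * lap (fun y => φ y γ) x
              + 2 * ∑ i, pd i (fun y => φ y γ) x * pd i (lap (fun y => φ y γ)) x)
            + 2 * lap (fun w => ∑ i, pd i (fun y => φ y γ) w * pd i (fun y => φ y γ) w) x := by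
        intro γ
        have p1 : lap (fun w => φ w γ * lap (fun y => φ y γ) w
              + φ w γ * lap (fun y => φ y γ) w
              + 2 * ∑ i, pd i (fun y => φ y γ) w * pd i (fun y => φ y γ) w) x
            = lap (fun w => φ w γ * lap (fun y => φ y γ) w
                + φ w γ * lap (fun y => φ y γ) w) x
              + lap (fun w =>
                  2 * ∑ i, pd i (fun y => φ y γ) w * pd i (fun y => φ y γ) w) x :=
          lap_add hU (((hcomp γ).mul (hΛ γ)).add ((hcomp γ).mul (hΛ γ)))
            (contDiffOn_const.mul (hκ γ γ)) hxU
        have p2 : lap (fun w => φ w γ * lap (fun y => φ y γ) w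
              + φ w γ * lap (fun y => φ y γ) w) x
            = lap (fun w => φ w γ * lap (fun y => φ y γ) w) x
              + lap (fun w => φ w γ * lap (fun y => φ y γ) w) x :=
          lap_add hU ((hcomp γ).mul (hΛ γ)) ((hcomp γ).mul (hΛ γ)) hxU
        have p3 : lap (fun w => φ w γ * lap (fun y => φ y γ) w) x
            = φ x γ * lap (lap (fun y => φ y γ)) x
              + lap (fun y => φ y γ) x * lap (fun y => φ y γ) x
              + 2 * ∑ i, pd i (fun y => φ y γ) x * pd i (lap (fun y => φ y γ)) x :=
          lap_mul hU (hcomp γ) (hΛ γ) hxU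
        have p4 : lap (fun w =>
              2 * ∑ i, pd i (fun y => φ y γ) w * pd i (fun y => φ y γ) w) x
            = 2 * lap (fun w =>
                ∑ i, pd i (fun y => φ y γ) w * pd i (fun y => φ y γ) w) x :=
          lap_const_mul hU (hκ γ γ) 2 hxU
        have p5 := hbi γ x hxU
        rw [p1, p2, p3, p4, p5]
        ring
      have hκeq : lap (fun w => ∑ i, pd i (fun y => φ y α) w * pd i (fun y => φ y α) w) x
          = lap (fun w => ∑ i, pd i (fun y => φ y β) w * pd i (fun y => φ y β) w) x := by
        refine lap_congr hU (fun z hz => ?_) hxU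
        show (∑ i, pd i (fun y => φ y α) z * pd i (fun y => φ y α) z)
          = (∑ i, pd i (fun y => φ y β) z * pd i (fun y => φ y β) z)
        rw [hkap z hz α α, hkap z hz β β]
        simp
      rw [h2, h3, hpart α, hpart β, hκeq] at h1
      linarith [h1]
  exact final_algebra (fun α β => pd β (pd α f) (φ x))
    (fun α β => ∑ i, pd i (fun y => φ y β) x * pd i (lap (fun y => φ y α)) x)
    (fun α => lap (fun y => φ y α) x) hDsym hoff hdiag htr

end GHM

/-- a smooth map `φ : U → ℝⁿ` on an open set `U ⊆ ℝᵐ` is a generalized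
harmonic morphism if and only if it is horizontally weakly conformal, every component
is biharmonic on `U`, and for all `α ≠ β` the functions `φ^α · φ^β` and
`(φ^α)² − (φ^β)²` are biharmonic on `U`. -/
theorem stmt_0 {m n : ℕ} (U : Set (E m)) (hU : IsOpen U)
    (φ : E m → E n) (hφ : ContDiffOn ℝ (⊤ : ℕ∞) φ U) :
    IsGHM φ U ↔
      (IsHWC φ U ∧
        (∀ α : Fin n, ∀ x ∈ U, lap (lap (fun y => φ y α)) x = 0) ∧
        (∀ α β : Fin n, α ≠ β →
          (∀ x ∈ U, lap (lap (fun y => φ y α * φ y β)) x = 0) ∧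
          (∀ x ∈ U, lap (lap (fun y => (φ y α) ^ 2 - (φ y β) ^ 2)) x = 0))) := by
  constructor
  · intro hg
    exact ⟨GHM.fwd_hwc hU hφ hg, fun α => GHM.fwd_comp hg α,
      fun α β hαβ => ⟨GHM.fwd_mul hg hαβ, GHM.fwd_sq hg hαβ⟩⟩
  · rintro ⟨hwc, hb, hc⟩
    exact GHM.reverse hU hφ hwc hb hc
end
end

section
/- Let U ⊆ ℝ^m be an open set and φ = (φ^1, …, φ^n) : U → ℝ^n a smooth map which is a generalized harmonic morphism. Then φ is horizontally weakly conformal; that is, at every point of U and for all 1 ≤ α ≠ β ≤ n one has |∇φ^α|² = |∇φ^β|² and ⟨∇φ^α, ∇φ^β⟩ = 0. -/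
open scoped BigOperators RealInnerProductSpace

noncomputable section

noncomputable def pd {m : ℕ} (i : Fin m) (f : E m → ℝ) (x : E m) : ℝ :=
  fderiv ℝ f x (EuclideanSpace.single i 1)

variable {m : ℕ}

lemma lap_eq (f : E m → ℝ) (x : E m) :
    lap f x = ∑ i : Fin m, pd i (fun y => pd i f y) x := rfl

lemma pd_congr {f g : E m → ℝ} {x : E m} (h : f =ᶠ[nhds x] g) (i : Fin m) :
    pd i f x = pd i g x := by unfold pd; rw [h.fderiv_eq]

lemma pd_congr_ev {f g : E m → ℝ} {x : E m} (h : f =ᶠ[nhds x] g) (i : Fin m) :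
    (fun y => pd i f y) =ᶠ[nhds x] (fun y => pd i g y) := by
  filter_upwards [h.eventuallyEq_nhds] with y hy using pd_congr hy i

lemma lap_congr {f g : E m → ℝ} {x : E m} (h : f =ᶠ[nhds x] g) : lap f x = lap g x := by
  rw [lap_eq, lap_eq]
  exact Finset.sum_congr rfl fun i _ => pd_congr (pd_congr_ev h i) i

lemma diffAt {O : Set (E m)} (hO : IsOpen O) {f : E m → ℝ} (hf : ContDiffOn ℝ (⊤ : ℕ∞) f O)
    {x : E m} (hx : x ∈ O) : DifferentiableAt ℝ f x :=
  (hf.differentiableOn (by simp)).differentiableAt (hO.mem_nhds hx)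

lemma contDiffOn_pd {O : Set (E m)} (hO : IsOpen O) {f : E m → ℝ}
    (hf : ContDiffOn ℝ (⊤ : ℕ∞) f O) (i : Fin m) :
    ContDiffOn ℝ (⊤ : ℕ∞) (fun x => pd i f x) O :=
  (hf.fderiv_of_isOpen hO (by simp)).clm_apply contDiffOn_const

lemma contDiffOn_lap {O : Set (E m)} (hO : IsOpen O) {f : E m → ℝ}
    (hf : ContDiffOn ℝ (⊤ : ℕ∞) f O) : ContDiffOn ℝ (⊤ : ℕ∞) (lap f) O := by
  have : lap f = fun x => ∑ i : Fin m, pd i (fun y => pd i f y) x := funext fun x => lap_eq f x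
  rw [this]
  exact ContDiffOn.sum fun i _ => contDiffOn_pd hO (contDiffOn_pd hO hf i) i

variable {u v : E m → ℝ} {x : E m}

lemma pd_add (i : Fin m) (hu : DifferentiableAt ℝ u x) (hv : DifferentiableAt ℝ v x) :
    pd i (fun y => u y + v y) x = pd i u x + pd i v x := by
  unfold pd; rw [fderiv_fun_add hu hv]; rfl

lemma pd_mul (i : Fin m) (hu : DifferentiableAt ℝ u x) (hv : DifferentiableAt ℝ v x) :
    pd i (fun y => u y * v y) x = pd i u x * v x + u x * pd i v x := by
  unfold pd; rw [fderiv_fun_mul hu hv]; simp; ring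

lemma pd_const_mul (i : Fin m) (c : ℝ) (hu : DifferentiableAt ℝ u x) :
    pd i (fun y => c * u y) x = c * pd i u x := by
  unfold pd; rw [fderiv_const_mul hu]; rfl

lemma pd_sub_const (i : Fin m) (c : ℝ) :
    pd i (fun y => u y - c) x = pd i u x := by
  unfold pd; rw [fderiv_sub_const]

lemma pd_sum {ι : Type*} (K : Finset ι) (g : ι → E m → ℝ) (i : Fin m)
    (hg : ∀ k ∈ K, DifferentiableAt ℝ (g k) x) :
    pd i (fun y => ∑ k ∈ K, g k y) x = ∑ k ∈ K, pd i (g k) x := by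
  unfold pd; rw [fderiv_fun_sum hg]; simp

lemma pd_pow (i : Fin m) (k : ℕ) (hu : DifferentiableAt ℝ u x) :
    pd i (fun y => u y ^ k) x = k * u x ^ (k - 1) * pd i u x := by
  induction k with
  | zero => simp [pd]
  | succ k ih =>
    have : (fun y => u y ^ (k+1)) = fun y => u y ^ k * u y := by
      funext y; ring
    rw [this, pd_mul i (hu.fun_pow k) hu, ih]
    rcases Nat.eq_zero_or_pos k with hk | hk
    · subst hk; simp [pd]
    · have h1 : k - 1 + 1 = k := Nat.succ_pred_eq_of_pos hk
      have : u x ^ (k-1) * u x = u x ^ k := by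
        rw [← pow_succ, h1]
      push_cast
      linear_combination ((k : ℝ) * pd i u x) * this


section LemA
variable {m : ℕ} {O : Set (E m)} {w : E m → ℝ}

lemma lap_pow4_on (hO : IsOpen O) (hw : ContDiffOn ℝ (⊤ : ℕ∞) w O) {x : E m} (hx : x ∈ O) :
    lap (fun y => w y ^ 4) x
      = 12 * w x ^ 2 * (∑ i, pd i w x ^ 2) + 4 * w x ^ 3 * lap w x := by
  rw [lap_eq]
  have step : ∀ i : Fin m, pd i (fun y => pd i (fun z => w z ^ 4) y) x
      = 12 * w x ^ 2 * pd i w x ^ 2 + 4 * w x ^ 3 * pd i (fun y => pd i w y) x := by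
    intro i
    have h1 : (fun y => pd i (fun z => w z ^ 4) y) =ᶠ[nhds x]
        (fun y => 4 * w y ^ 3 * pd i w y) := by
      filter_upwards [hO.mem_nhds hx] with y hy
      rw [pd_pow i 4 (diffAt hO hw hy)]
      norm_num
    rw [pd_congr h1 i]
    have hwx := diffAt hO hw hx
    have hdw : DifferentiableAt ℝ (fun y => pd i w y) x :=
      diffAt hO (contDiffOn_pd hO hw i) hx
    rw [pd_mul i (by fun_prop) hdw, pd_const_mul i 4 (hwx.fun_pow 3), pd_pow i 3 hwx]
    ring
  rw [Finset.sum_congr rfl fun i _ => step i]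
  rw [Finset.sum_add_distrib, ← Finset.mul_sum, ← Finset.mul_sum, lap_eq]

lemma lapLap_pow4 (hO : IsOpen O) (hw : ContDiffOn ℝ (⊤ : ℕ∞) w O) {x₀ : E m} (hx₀ : x₀ ∈ O)
    (hw0 : w x₀ = 0) :
    lap (lap (fun y => w y ^ 4)) x₀ = 24 * (∑ i, pd i w x₀ ^ 2) ^ 2 := by
  have hS : ContDiffOn ℝ (⊤ : ℕ∞) (fun x => ∑ i, pd i w x ^ 2) O :=
    ContDiffOn.sum fun i _ => (contDiffOn_pd hO hw i).pow 2
  have hT : ContDiffOn ℝ (⊤ : ℕ∞) (lap w) O := contDiffOn_lap hO hw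
  set S : E m → ℝ := fun x => ∑ i, pd i w x ^ 2 with hSdef
  set T : E m → ℝ := fun x => lap w x with hTdef
  have hT' : ContDiffOn ℝ (⊤ : ℕ∞) T O := hT
  have key : lap (lap (fun y => w y ^ 4)) x₀
      = lap (fun x => 12 * w x ^ 2 * S x + 4 * w x ^ 3 * T x) x₀ := by
    refine lap_congr ?_
    filter_upwards [hO.mem_nhds hx₀] with x hx using lap_pow4_on hO hw hx
  rw [key, lap_eq]
  have main : ∀ j : Fin m,
      pd j (fun y => pd j (fun z => 12 * w z ^ 2 * S z + 4 * w z ^ 3 * T z) y) x₀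
        = 24 * pd j w x₀ ^ 2 * S x₀ := by
    intro j
    have hDS : ContDiffOn ℝ (⊤ : ℕ∞) (fun y => pd j S y) O := contDiffOn_pd hO hS j
    have hDT : ContDiffOn ℝ (⊤ : ℕ∞) (fun y => pd j T y) O := contDiffOn_pd hO hT' j
    have hDw : ContDiffOn ℝ (⊤ : ℕ∞) (fun y => pd j w y) O := contDiffOn_pd hO hw j
    have h1 : (fun y => pd j (fun z => 12 * w z ^ 2 * S z + 4 * w z ^ 3 * T z) y) =ᶠ[nhds x₀]
        (fun y => 24 * (w y * (pd j w y * S y))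
          + w y ^ 2 * (12 * pd j S y + 12 * (pd j w y * T y) + 4 * (w y * pd j T y))) := by
      filter_upwards [hO.mem_nhds hx₀] with y hy
      have hwy := diffAt hO hw hy
      have hSy := diffAt hO hS hy
      have hTy := diffAt hO hT' hy
      have hdwy := diffAt hO hDw hy
      rw [pd_add j (by fun_prop) (by fun_prop)]
      rw [pd_mul j (by fun_prop) hSy, pd_mul j (by fun_prop) hTy,
        pd_const_mul j 12 (hwy.fun_pow 2), pd_const_mul j 4 (hwy.fun_pow 3),
        pd_pow j 2 hwy, pd_pow j 3 hwy]
      push_cast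
      ring
    rw [pd_congr h1 j]
    have hwx := diffAt hO hw hx₀
    have hSx := diffAt hO hS hx₀
    have hTx := diffAt hO hT' hx₀
    have hdwx := diffAt hO hDw hx₀
    have hDSx := diffAt hO hDS hx₀
    have hDTx := diffAt hO hDT hx₀
    rw [pd_add j (by fun_prop) (by fun_prop)]
    rw [pd_const_mul j 24 (by fun_prop), pd_mul j hwx (by fun_prop),
      pd_mul j hdwx hSx,
      pd_mul j (hwx.fun_pow 2) (by fun_prop),
      pd_pow j 2 hwx, hw0]
    ring
  rw [Finset.sum_congr rfl fun j _ => main j, ← Finset.sum_mul, ← Finset.mul_sum]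
  ring

end LemA


section Lin
variable {m : ℕ} {O : Set (E m)} {x : E m} {ι : Type*}

lemma lap_sum_on (hO : IsOpen O) (K : Finset ι) (g : ι → E m → ℝ)
    (hg : ∀ k ∈ K, ContDiffOn ℝ (⊤ : ℕ∞) (g k) O) (hx : x ∈ O) :
    lap (fun y => ∑ k ∈ K, g k y) x = ∑ k ∈ K, lap (g k) x := by
  rw [lap_eq]
  have step : ∀ i : Fin m, pd i (fun y => pd i (fun z => ∑ k ∈ K, g k z) y) x
      = ∑ k ∈ K, pd i (fun y => pd i (g k) y) x := by
    intro i
    have h1 : (fun y => pd i (fun z => ∑ k ∈ K, g k z) y) =ᶠ[nhds x]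
        (fun y => ∑ k ∈ K, pd i (g k) y) := by
      filter_upwards [hO.mem_nhds hx] with y hy
      exact pd_sum K g i fun k hk => diffAt hO (hg k hk) hy
    rw [pd_congr h1 i]
    exact pd_sum K _ i fun k hk => diffAt hO (contDiffOn_pd hO (hg k hk) i) hx
  rw [Finset.sum_congr rfl fun i _ => step i, Finset.sum_comm]
  exact Finset.sum_congr rfl fun k _ => (lap_eq (g k) x).symm

lemma lap_const_mul_on (hO : IsOpen O) (c : ℝ) {g : E m → ℝ}
    (hg : ContDiffOn ℝ (⊤ : ℕ∞) g O) (hx : x ∈ O) :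
    lap (fun y => c * g y) x = c * lap (g) x := by
  rw [lap_eq]
  have step : ∀ i : Fin m, pd i (fun y => pd i (fun z => c * g z) y) x
      = c * pd i (fun y => pd i g y) x := by
    intro i
    have h1 : (fun y => pd i (fun z => c * g z) y) =ᶠ[nhds x]
        (fun y => c * pd i g y) := by
      filter_upwards [hO.mem_nhds hx] with y hy
      exact pd_const_mul i c (diffAt hO hg hy)
    rw [pd_congr h1 i]
    exact pd_const_mul i c (diffAt hO (contDiffOn_pd hO hg i) hx)
  rw [Finset.sum_congr rfl fun i _ => step i, ← Finset.mul_sum, lap_eq]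

lemma lapLap_combo (hO : IsOpen O) (K : Finset ι) (c : ι → ℝ) (g : ι → E m → ℝ)
    (hg : ∀ k ∈ K, ContDiffOn ℝ (⊤ : ℕ∞) (g k) O) (hx : x ∈ O) :
    lap (lap (fun y => ∑ k ∈ K, c k * g k y)) x = ∑ k ∈ K, c k * lap (lap (g k)) x := by
  have hcg : ∀ k ∈ K, ContDiffOn ℝ (⊤ : ℕ∞) (fun y => c k * g k y) O :=
    fun k hk => ContDiffOn.mul contDiffOn_const (hg k hk)
  have h1 : lap (lap (fun y => ∑ k ∈ K, c k * g k y)) x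
      = lap (fun y => ∑ k ∈ K, c k * lap (g k) y) x := by
    refine lap_congr ?_
    filter_upwards [hO.mem_nhds hx] with y hy
    rw [lap_sum_on hO K _ hcg hy]
    exact Finset.sum_congr rfl fun k hk => lap_const_mul_on hO (c k) (hg k hk) hy
  rw [h1, lap_sum_on hO K _ (fun k hk => ContDiffOn.mul contDiffOn_const
    (contDiffOn_lap hO (hg k hk))) hx]
  exact Finset.sum_congr rfl fun k hk => lap_const_mul_on hO (c k) (contDiffOn_lap hO (hg k hk)) hx

end Lin


section Harm
variable {n : ℕ}

lemma contDiff_coord (α : Fin n) : ContDiff ℝ (⊤ : ℕ∞) (fun y : E n => y α) :=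
  (EuclideanSpace.proj (𝕜 := ℝ) α).contDiff

lemma diffAt_coord (α : Fin n) (y : E n) : DifferentiableAt ℝ (fun z : E n => z α) y :=
  ((contDiff_coord α).differentiable (by simp)).differentiableAt

lemma pd_coord (α : Fin n) (i : Fin n) (y : E n) :
    pd i (fun z : E n => z α) y = if α = i then 1 else 0 := by
  have h : fderiv ℝ (fun z : E n => z α) y = EuclideanSpace.proj (𝕜 := ℝ) α :=
    (EuclideanSpace.proj (𝕜 := ℝ) α).fderiv
  unfold pd
  rw [h]
  simp [EuclideanSpace.single_apply]

lemma pd_lin (α β : Fin n) (s t aα aβ : ℝ) (i : Fin n) (y : E n) :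
    pd i (fun z : E n => s * (z α - aα) + t * (z β - aβ)) y
      = s * (if α = i then 1 else 0) + t * (if β = i then 1 else 0) := by
  have h1 : DifferentiableAt ℝ (fun z : E n => z α - aα) y :=
    (diffAt_coord α y).sub_const aα
  have h2 : DifferentiableAt ℝ (fun z : E n => z β - aβ) y :=
    (diffAt_coord β y).sub_const aβ
  rw [pd_add i (h1.const_mul s) (h2.const_mul t),
    pd_const_mul i s h1, pd_const_mul i t h2,
    pd_sub_const, pd_sub_const, pd_coord, pd_coord]

lemma lap_lin_pow4 (α β : Fin n) (hαβ : α ≠ β) (s t aα aβ : ℝ) (y : E n) :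
    lap (fun z : E n => (s * (z α - aα) + t * (z β - aβ)) ^ 4) y
      = 12 * (s ^ 2 + t ^ 2) * (s * (y α - aα) + t * (y β - aβ)) ^ 2 := by
  set L : E n → ℝ := fun z => s * (z α - aα) + t * (z β - aβ) with hL
  have hLd : ∀ z, DifferentiableAt ℝ L z := fun z =>
    (((diffAt_coord α z).sub_const aα).const_mul s).add
      (((diffAt_coord β z).sub_const aβ).const_mul t)
  set κ : Fin n → ℝ := fun i => s * (if α = i then 1 else 0) + t * (if β = i then 1 else 0)
    with hκ
  have hpdL : ∀ (i : Fin n) (z : E n), pd i L z = κ i := fun i z => pd_lin α β s t aα aβ i z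
  rw [lap_eq]
  have step : ∀ i : Fin n, pd i (fun z => pd i (fun w => L w ^ 4) z) y
      = 12 * L y ^ 2 * κ i ^ 2 := by
    intro i
    have h1 : (fun z => pd i (fun w => L w ^ 4) z) = fun z => (4 * κ i) * L z ^ 3 := by
      funext z
      rw [pd_pow i 4 (hLd z), hpdL i z]
      norm_num; ring
    rw [h1, pd_const_mul i _ ((hLd y).fun_pow 3), pd_pow i 3 (hLd y), hpdL i y]
    push_cast; ring
  rw [Finset.sum_congr rfl fun i _ => step i, ← Finset.mul_sum]
  have hsum : ∑ i : Fin n, κ i ^ 2 = s ^ 2 + t ^ 2 := by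
    have hterm : ∀ i : Fin n, κ i ^ 2
        = (if α = i then s ^ 2 else 0) + (if β = i then t ^ 2 else 0) := by
      intro i
      by_cases h1 : α = i <;> by_cases h2 : β = i
      · exact absurd (h1.trans h2.symm) hαβ
      all_goals simp [hκ, h1, h2] <;> ring
    rw [Finset.sum_congr rfl fun i _ => hterm i, Finset.sum_add_distrib]
    simp
  rw [hsum]
  ring

end Harm


section Key
variable {m n : ℕ}

lemma harmonic_family (α β : Fin n) (hαβ : α ≠ β) (c s t : Fin 4 → ℝ) (aα aβ : ℝ)
    (hpoly : ∀ u v : ℝ,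
      ∑ k : Fin 4, c k * ((s k) ^ 2 + (t k) ^ 2) * (s k * u + t k * v) ^ 2 = 0) :
    HarmonicOn (fun y : E n =>
      ∑ k : Fin 4, c k * (s k * (y α - aα) + t k * (y β - aβ)) ^ 4) Set.univ := by
  have hLsm : ∀ k : Fin 4,
      ContDiff ℝ (⊤ : ℕ∞) (fun y : E n => (s k * (y α - aα) + t k * (y β - aβ)) ^ 4) := by
    intro k
    exact (((contDiff_const.mul ((contDiff_coord α).sub contDiff_const)).add
      (contDiff_const.mul ((contDiff_coord β).sub contDiff_const))).pow 4)
  constructor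
  · rw [contDiffOn_univ]
    exact ContDiff.sum fun k _ => contDiff_const.mul (hLsm k)
  · intro y _
    rw [lap_sum_on isOpen_univ Finset.univ
      (fun k z => c k * (s k * (z α - aα) + t k * (z β - aβ)) ^ 4)
      (fun k _ => (contDiff_const.mul (hLsm k)).contDiffOn) (Set.mem_univ y)]
    have hterm : ∀ k : Fin 4,
        lap (fun z : E n => c k * (s k * (z α - aα) + t k * (z β - aβ)) ^ 4) y
          = 12 * (c k * ((s k) ^ 2 + (t k) ^ 2)
              * (s k * (y α - aα) + t k * (y β - aβ)) ^ 2) := by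
      intro k
      rw [lap_const_mul_on isOpen_univ (c k) (hLsm k).contDiffOn (Set.mem_univ y),
        lap_lin_pow4 α β hαβ (s k) (t k) aα aβ y]
      ring
    rw [Finset.sum_congr rfl fun k _ => hterm k, ← Finset.mul_sum,
      hpoly (y α - aα) (y β - aβ), mul_zero]

lemma key_eq {U : Set (E m)} (hU : IsOpen U) {φ : E m → E n}
    (hφ : ContDiffOn ℝ (⊤ : ℕ∞) φ U) (hGHM : IsGHM φ U) {x : E m} (hx : x ∈ U)
    (α β : Fin n) (hαβ : α ≠ β) (c s t : Fin 4 → ℝ)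
    (hpoly : ∀ u v : ℝ,
      ∑ k : Fin 4, c k * ((s k) ^ 2 + (t k) ^ 2) * (s k * u + t k * v) ^ 2 = 0) :
    ∑ k : Fin 4, c k * (∑ i : Fin m,
      (s k * pd i (fun y => φ y α) x + t k * pd i (fun y => φ y β) x) ^ 2) ^ 2 = 0 := by
  set aα := φ x α
  set aβ := φ x β
  have hφα : ContDiffOn ℝ (⊤ : ℕ∞) (fun y => φ y α) U :=
    (EuclideanSpace.proj (𝕜 := ℝ) α).contDiff.comp_contDiffOn hφ
  have hφβ : ContDiffOn ℝ (⊤ : ℕ∞) (fun y => φ y β) U :=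
    (EuclideanSpace.proj (𝕜 := ℝ) β).contDiff.comp_contDiffOn hφ
  set w : Fin 4 → E m → ℝ :=
    fun k z => s k * (φ z α - aα) + t k * (φ z β - aβ) with hw
  have hwsm : ∀ k, ContDiffOn ℝ (⊤ : ℕ∞) (w k) U := by
    intro k
    exact ((contDiffOn_const.mul (hφα.sub contDiffOn_const)).add
      (contDiffOn_const.mul (hφβ.sub contDiffOn_const)))
  have hw0 : ∀ k, w k x = 0 := by intro k; simp [hw, aα, aβ]
  -- the biharmonicity conclusion
  have hhar := harmonic_family α β hαβ c s t aα aβ hpoly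
  have hbi := hGHM Set.univ isOpen_univ _ hhar
  have hx' : x ∈ U ∩ φ ⁻¹' Set.univ := by simp [hx]
  have h0 := hbi.2 x hx'
  have hcomp : ((fun y : E n =>
      ∑ k : Fin 4, c k * (s k * (y α - aα) + t k * (y β - aβ)) ^ 4) ∘ φ)
      = fun z => ∑ k : Fin 4, c k * (w k z) ^ 4 := rfl
  rw [hcomp] at h0
  have hsplit : lap (lap (fun z => ∑ k : Fin 4, c k * (w k z) ^ 4)) x
      = ∑ k : Fin 4, c k * lap (lap (fun z => w k z ^ 4)) x := by
    exact lapLap_combo hU Finset.univ c (fun k z => w k z ^ 4)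
      (fun k _ => (hwsm k).pow 4) hx
  rw [hsplit] at h0
  have hlap4 : ∀ k : Fin 4, lap (lap (fun z => w k z ^ 4)) x
      = 24 * (∑ i : Fin m, pd i (w k) x ^ 2) ^ 2 :=
    fun k => lapLap_pow4 hU (hwsm k) hx (hw0 k)
  have hpdw : ∀ (k : Fin 4) (i : Fin m), pd i (w k) x
      = s k * pd i (fun y => φ y α) x + t k * pd i (fun y => φ y β) x := by
    intro k i
    have h1 : DifferentiableAt ℝ (fun z => φ z α - aα) x :=
      (diffAt hU hφα hx).sub_const aα
    have h2 : DifferentiableAt ℝ (fun z => φ z β - aβ) x :=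
      (diffAt hU hφβ hx).sub_const aβ
    rw [hw]
    rw [pd_add i (h1.const_mul (s k)) (h2.const_mul (t k)),
      pd_const_mul i (s k) h1, pd_const_mul i (t k) h2, pd_sub_const, pd_sub_const]
  have h0' : (24 : ℝ) * ∑ k : Fin 4, c k * (∑ i : Fin m,
      (s k * pd i (fun y => φ y α) x + t k * pd i (fun y => φ y β) x) ^ 2) ^ 2 = 0 := by
    rw [Finset.mul_sum]
    rw [← h0]
    refine Finset.sum_congr rfl fun k _ => ?_
    rw [hlap4 k]
    simp_rw [hpdw k]
    ring
  linarith

end Key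


section Grad
open scoped RealInnerProductSpace
variable {m : ℕ}

lemma grad_coord (f : E m → ℝ) (x : E m) (i : Fin m) :
    gradient f x i = pd i f x := by
  have h1 : ⟪gradient f x, EuclideanSpace.single i (1 : ℝ)⟫
      = fderiv ℝ f x (EuclideanSpace.single i 1) := by
    rw [gradient]
    exact InnerProductSpace.toDual_symm_apply
  have h2 : ⟪gradient f x, EuclideanSpace.single i (1 : ℝ)⟫ = gradient f x i := by
    rw [EuclideanSpace.inner_single_right]
    simp
  rw [← h2, h1]; rfl

lemma inner_grad (f g : E m → ℝ) (x : E m) :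
    ⟪gradient f x, gradient g x⟫ = ∑ i : Fin m, pd i f x * pd i g x := by
  rw [PiLp.inner_apply]
  exact Finset.sum_congr rfl fun i _ => by
    simp [grad_coord, mul_comm]

lemma norm_grad_sq (f : E m → ℝ) (x : E m) :
    ‖gradient f x‖ ^ 2 = ∑ i : Fin m, pd i f x ^ 2 := by
  rw [← real_inner_self_eq_norm_sq, inner_grad]
  exact Finset.sum_congr rfl fun i _ => (sq (pd i f x)).symm

end Grad


open scoped RealInnerProductSpace


/-- a generalized harmonic morphism `φ : U → ℝⁿ` is horizontally weakly
conformal: at every point of `U` and for all `α ≠ β`, `|∇φ^α|² = |∇φ^β|²` and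
`⟨∇φ^α, ∇φ^β⟩ = 0`. -/
theorem stmt_3 {m n : ℕ} (U : Set (E m)) (hU : IsOpen U)
    (φ : E m → E n) (hφ : ContDiffOn ℝ (⊤ : ℕ∞) φ U) (hGHM : IsGHM φ U) :
    ∀ x ∈ U, ∀ α β : Fin n, α ≠ β →
      ‖gradient (fun y => φ y α) x‖ ^ 2 = ‖gradient (fun y => φ y β) x‖ ^ 2 ∧
      ⟪gradient (fun y => φ y α) x, gradient (fun y => φ y β) x⟫ = 0 := by
  intro x hx α β hαβ
  have hQ : ∀ s t : ℝ,
      (∑ i : Fin m, (s * pd i (fun y => φ y α) x + t * pd i (fun y => φ y β) x) ^ 2)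
      = s ^ 2 * (∑ i : Fin m, pd i (fun y => φ y α) x ^ 2)
        + 2 * s * t * (∑ i : Fin m, pd i (fun y => φ y α) x * pd i (fun y => φ y β) x)
        + t ^ 2 * (∑ i : Fin m, pd i (fun y => φ y β) x ^ 2) := by
    intro s t
    rw [Finset.mul_sum, Finset.mul_sum, Finset.mul_sum, ← Finset.sum_add_distrib,
      ← Finset.sum_add_distrib]
    exact Finset.sum_congr rfl fun i _ => by ring
  have E1 := key_eq hU hφ hGHM hx α β hαβ ![2, 2, -(1/2), -(1/2)] ![1, 0, 1, 1] ![0, 1, 1, -1]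
    (by intro u v; rw [Fin.sum_univ_four]; simp only [Matrix.cons_val]; norm_num; ring)
  have E2 := key_eq hU hφ hGHM hx α β hαβ ![5/24, -(5/24), -(1/24), 1/24] ![1, 1, 1, 1]
    ![1, -1, 2, -2]
    (by intro u v; rw [Fin.sum_univ_four]; simp only [Matrix.cons_val]; norm_num; ring)
  simp_rw [hQ] at E1 E2
  rw [Fin.sum_univ_four] at E1 E2
  set a := ∑ i : Fin m, pd i (fun y => φ y α) x ^ 2 with ha
  set b := ∑ i : Fin m, pd i (fun y => φ y β) x ^ 2 with hb
  set cc := ∑ i : Fin m, pd i (fun y => φ y α) x * pd i (fun y => φ y β) x with hcc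
  simp only [Matrix.cons_val] at E1 E2
  norm_num at E1 E2
  have key1 : (a - b) ^ 2 = 4 * cc ^ 2 := by linear_combination E1
  have key2 : cc * (a - b) = 0 := by linear_combination E2
  have h4 : cc ^ 2 * (a - b) ^ 2 = 0 := by
    have : (cc * (a - b)) ^ 2 = 0 := by rw [key2]; ring
    linear_combination this
  rw [key1] at h4
  have h5 : cc ^ 4 = 0 := by linear_combination h4 / 4
  have hcc0 : cc = 0 := pow_eq_zero_iff (n := 4) (by norm_num) |>.1 h5
  have hab : a = b := by
    have : (a - b) ^ 2 = 0 := by rw [key1, hcc0]; ring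
    have := pow_eq_zero_iff (n := 2) (by norm_num) |>.1 this
    linarith
  constructor
  · rw [norm_grad_sq, norm_grad_sq, ← ha, ← hb]; exact hab
  · rw [inner_grad, ← hcc]; exact hcc0
end
end
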